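/- arXiv:1407.8061 — 4 statements merged into one kernel-verified Lean document; each statement's English description precedes it below -/
import Mathlib

section
/- Let p ∈ (1,∞), s ∈ (0,1), N > sp, and Ω ⊂ ℝ^N a bounded measurable set. If (u_j) is a sequence of measurable functions ℝ^N → ℝ vanishing a.e. outside Ω with uniformly bounded Gagliardo seminorms [u_j]_{s,p}, and u_j → u almost everywhere, then [u_j]_{s,p}^p = [u_j − u]_{s,p}^p + [u]_{s,p}^p + o(1) as j → ∞. -/
open MeasureTheory Filter Topology ENNReal NNReal

private lemma BL_two_ineq {p : ℝ} (hp : 1 ≤ p) (x y : ℝ) :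
    |x + y| ^ p ≤ 2 ^ (p - 1) * (|x| ^ p + |y| ^ p) := by
  have h1 : |x + y| ^ p ≤ (|x| + |y|) ^ p :=
    Real.rpow_le_rpow (abs_nonneg _) (abs_add_le x y) (by linarith)
  refine h1.trans ?_
  have h := NNReal.rpow_add_le_mul_rpow_add_rpow ‖x‖₊ ‖y‖₊ hp
  have h' := NNReal.coe_le_coe.2 h
  push_cast at h'
  simpa [Real.norm_eq_abs] using h'

private lemma BL_conv_ineq {p : ℝ} (hp : 1 ≤ p) {lam : ℝ} (h0 : 0 < lam) (h1 : lam < 1)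
    {x y : ℝ} (hx : 0 ≤ x) (hy : 0 ≤ y) :
    (x + y) ^ p ≤ lam ^ (1 - p) * x ^ p + (1 - lam) ^ (1 - p) * y ^ p := by
  have h1l : 0 < 1 - lam := by linarith
  have hc := (convexOn_rpow hp).2 (Set.mem_Ici.2 (div_nonneg hx h0.le))
      (Set.mem_Ici.2 (div_nonneg hy h1l.le)) h0.le h1l.le (by ring)
  simp only [smul_eq_mul] at hc
  have e1 : lam * (x / lam) = x := by field_simp
  have e2 : (1 - lam) * (y / (1 - lam)) = y := by field_simp
  rw [e1, e2] at hc
  refine hc.trans (le_of_eq ?_)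
  rw [Real.div_rpow hx h0.le, Real.div_rpow hy h1l.le,
    Real.rpow_sub h0, Real.rpow_sub h1l, Real.rpow_one, Real.rpow_one]
  ring

private lemma BL_key_ineq {p : ℝ} (hp : 1 < p) {ε : ℝ} (hε : 0 < ε) :
    ∃ C : ℝ, 0 ≤ C ∧ ∀ a b : ℝ,
      |(|a + b| ^ p - |a| ^ p - |b| ^ p)| ≤ ε * |a| ^ p + C * |b| ^ p := by
  have hp1 : 1 ≤ p := hp.le
  have h2pos : (0:ℝ) < 2 ^ (p - 1) := Real.rpow_pos_of_pos two_pos _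
  have h2p : (1:ℝ) ≤ 2 ^ (p - 1) := Real.one_le_rpow one_le_two (by linarith)
  set t : ℝ := 1 + ε / 2 ^ (p - 1) with ht
  have ht1 : 1 < t := by
    have : 0 < ε / 2 ^ (p - 1) := div_pos hε h2pos
    simp only [ht]; linarith
  have ht0 : (0:ℝ) < t := by linarith
  set lam : ℝ := t ^ (1 / (1 - p)) with hlamdef
  have hlam0 : 0 < lam := Real.rpow_pos_of_pos ht0 _
  have hlam1 : lam < 1 :=
    Real.rpow_lt_one_of_one_lt_of_neg ht1 (div_neg_of_pos_of_neg one_pos (by linarith))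
  have hlamp : lam ^ (1 - p) = t := by
    rw [hlamdef, ← Real.rpow_mul ht0.le, one_div_mul_cancel (by linarith : (1:ℝ) - p ≠ 0),
      Real.rpow_one]
  set c : ℝ := (1 - lam) ^ (1 - p) with hcdef
  have hc0 : 0 ≤ c := Real.rpow_nonneg (by linarith) _
  refine ⟨c + ε + 1, by linarith, fun a b => ?_⟩
  have hAp : 0 ≤ |a| ^ p := Real.rpow_nonneg (abs_nonneg _) _
  have hBp : 0 ≤ |b| ^ p := Real.rpow_nonneg (abs_nonneg _) _
  have hSp : 0 ≤ |a + b| ^ p := Real.rpow_nonneg (abs_nonneg _) _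
  have hub : |a + b| ^ p ≤ t * |a| ^ p + c * |b| ^ p := by
    have h1 : |a + b| ^ p ≤ (|a| + |b|) ^ p :=
      Real.rpow_le_rpow (abs_nonneg _) (abs_add_le a b) (by linarith)
    refine h1.trans ?_
    have := BL_conv_ineq hp1 hlam0 hlam1 (abs_nonneg a) (abs_nonneg b)
    rwa [hlamp, ← hcdef] at this
  have hlb : |a| ^ p ≤ t * |a + b| ^ p + c * |b| ^ p := by
    have habs : |a| ≤ |a + b| + |b| := by
      have : a = (a + b) + (-b) := by ring
      calc |a| = |(a + b) + (-b)| := by rw [← this]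
        _ ≤ |a + b| + |(-b)| := abs_add_le _ _
        _ = |a + b| + |b| := by rw [abs_neg]
    have h1 : |a| ^ p ≤ (|a + b| + |b|) ^ p :=
      Real.rpow_le_rpow (abs_nonneg _) habs (by linarith)
    refine h1.trans ?_
    have := BL_conv_ineq hp1 hlam0 hlam1 (abs_nonneg (a + b)) (abs_nonneg b)
    rwa [hlamp, ← hcdef] at this
  have hSb : |a + b| ^ p ≤ 2 ^ (p - 1) * (|a| ^ p + |b| ^ p) := BL_two_ineq hp1 a b
  have htm1 : (t - 1) * 2 ^ (p - 1) = ε := by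
    simp only [ht]; field_simp; ring
  have ht1' : t - 1 ≤ ε := by
    have : t - 1 = ε / 2 ^ (p - 1) := by simp [ht]
    rw [this]; exact div_le_self hε.le h2p
  have ht1'' : 0 ≤ t - 1 := by linarith
  rw [abs_le]
  constructor
  · -- lower bound
    have u2 : (t - 1) * |a + b| ^ p ≤ ε * |a| ^ p + ε * |b| ^ p := by
      calc (t - 1) * |a + b| ^ p ≤ (t - 1) * (2 ^ (p - 1) * (|a| ^ p + |b| ^ p)) :=
            mul_le_mul_of_nonneg_left hSb ht1''
        _ = ε * |a| ^ p + ε * |b| ^ p := by rw [← mul_assoc, htm1]; ring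
    have u4 : t * |a + b| ^ p = |a + b| ^ p + (t - 1) * |a + b| ^ p := by ring
    linarith
  · -- upper bound
    have u1 : (t - 1) * |a| ^ p ≤ ε * |a| ^ p := mul_le_mul_of_nonneg_right ht1' hAp
    have u4 : t * |a| ^ p = |a| ^ p + (t - 1) * |a| ^ p := by ring
    have u5 : 0 ≤ ε * |b| ^ p := mul_nonneg hε.le hBp
    linarith

noncomputable def gagPow (N : ℕ) (s p : ℝ) (u : (Fin N → ℝ) → ℝ) : ℝ≥0∞ :=
  ∫⁻ z : (Fin N → ℝ) × (Fin N → ℝ),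
    ENNReal.ofReal (|u z.1 - u z.2| ^ p / dist z.1 z.2 ^ ((N : ℝ) + s * p))

noncomputable def gagNorm (N : ℕ) (s p : ℝ) (u : (Fin N → ℝ) → ℝ) : ℝ :=
  (gagPow N s p u).toReal ^ (1 / p)

noncomputable def Aform (N : ℕ) (s p : ℝ) (u v : (Fin N → ℝ) → ℝ) : ℝ :=
  ∫ z : (Fin N → ℝ) × (Fin N → ℝ),
    |u z.1 - u z.2| ^ (p - 2) * (u z.1 - u z.2) * (v z.1 - v z.2)
      / dist z.1 z.2 ^ ((N : ℝ) + s * p)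

noncomputable def lnorm (N : ℕ) (q : ℝ) (Ω : Set (Fin N → ℝ)) (u : (Fin N → ℝ) → ℝ) : ℝ :=
  (∫ x in Ω, |u x| ^ q) ^ (1 / q)

/-- Membership in the fractional Sobolev space `W^{s,p}(ℝ^N)`. -/
def memW (N : ℕ) (s p : ℝ) (u : (Fin N → ℝ) → ℝ) : Prop :=
  Measurable u ∧ MeasureTheory.MemLp u (ENNReal.ofReal p) volume ∧ gagPow N s p u < ⊤

/-- Membership in `X = {u ∈ W^{s,p}(ℝ^N) : u = 0 a.e. in ℝ^N \ Ω}`. -/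
def inX (N : ℕ) (s p : ℝ) (Ω : Set (Fin N → ℝ)) (u : (Fin N → ℝ) → ℝ) : Prop :=
  memW N s p u ∧ ∀ᵐ x : (Fin N → ℝ), x ∉ Ω → u x = 0

/-- Brézis–Lieb type splitting for the Gagliardo seminorm: if `(u_j)` vanishes a.e. outside
a bounded set `Ω`, has uniformly bounded Gagliardo seminorms, and converges a.e. to `v`,
then `[u_j]^p = [u_j − v]^p + [v]^p + o(1)`. -/
theorem gagliardo_brezis_lieb (N : ℕ) (s p : ℝ) (hp : 1 < p) (hs : 0 < s) (hs1 : s < 1)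
    (hN : s * p < (N : ℝ)) (Ω : Set (Fin N → ℝ)) (hΩm : MeasurableSet Ω)
    (hΩb : Bornology.IsBounded Ω)
    (u : ℕ → (Fin N → ℝ) → ℝ) (v : (Fin N → ℝ) → ℝ)
    (hum : ∀ j, Measurable (u j)) (hvm : Measurable v)
    (hu0 : ∀ j, ∀ᵐ x : (Fin N → ℝ), x ∉ Ω → u j x = 0)
    (hbd : ∃ C : ℝ≥0∞, C < ⊤ ∧ ∀ j, gagPow N s p (u j) ≤ C)
    (hae : ∀ᵐ x : (Fin N → ℝ), Tendsto (fun j => u j x) atTop (𝓝 (v x))) :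
    Tendsto (fun j => (gagPow N s p (u j)).toReal
        - (gagPow N s p (fun x => u j x - v x)).toReal - (gagPow N s p v).toReal)
      atTop (𝓝 0) := by
  classical
  obtain ⟨C0, hC0top, hC0⟩ := hbd
  have hp0 : (0:ℝ) < p := lt_trans one_pos hp
  have hq0 : (0:ℝ) ≤ (N : ℝ) + s * p := by
    have h1 : (0:ℝ) ≤ (N : ℝ) := Nat.cast_nonneg N
    have h2 : 0 < s * p := mul_pos hs hp0
    linarith
  set d : (Fin N → ℝ) × (Fin N → ℝ) → ℝ := fun z => dist z.1 z.2 ^ ((N : ℝ) + s * p) with hd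
  have hd0 : ∀ z, 0 ≤ d z := fun z => Real.rpow_nonneg dist_nonneg _
  set G : ℕ → (Fin N → ℝ) × (Fin N → ℝ) → ℝ :=
    fun j z => |u j z.1 - u j z.2| ^ p / d z with hG
  set H : ℕ → (Fin N → ℝ) × (Fin N → ℝ) → ℝ :=
    fun j z => |(u j z.1 - v z.1) - (u j z.2 - v z.2)| ^ p / d z with hH
  set K : (Fin N → ℝ) × (Fin N → ℝ) → ℝ :=
    fun z => |v z.1 - v z.2| ^ p / d z with hK
  have egG : ∀ j, gagPow N s p (u j) = ∫⁻ z, ENNReal.ofReal (G j z) := fun j => rfl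
  have egH : ∀ j, gagPow N s p (fun x => u j x - v x) = ∫⁻ z, ENNReal.ofReal (H j z) :=
    fun j => rfl
  have egK : gagPow N s p v = ∫⁻ z, ENNReal.ofReal (K z) := rfl
  -- measurability
  have hFp : Continuous (fun t : ℝ => |t| ^ p) :=
    continuous_abs.rpow_const (fun t => Or.inr hp0.le)
  have hdm : Measurable d :=
    ((continuous_fst.dist continuous_snd).rpow_const (fun z => Or.inr hq0)).measurable
  have hGm : ∀ j, Measurable (G j) := fun j =>
    (hFp.measurable.comp (((hum j).comp measurable_fst).sub ((hum j).comp measurable_snd))).div hdm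
  have hKm : Measurable K :=
    (hFp.measurable.comp ((hvm.comp measurable_fst).sub (hvm.comp measurable_snd))).div hdm
  have hHm : ∀ j, Measurable (H j) := fun j =>
    (hFp.measurable.comp
      ((((hum j).comp measurable_fst).sub (hvm.comp measurable_fst)).sub
        (((hum j).comp measurable_snd).sub (hvm.comp measurable_snd)))).div hdm
  -- nonnegativity
  have hGnn : ∀ j z, 0 ≤ G j z := fun j z =>
    div_nonneg (Real.rpow_nonneg (abs_nonneg _) _) (hd0 z)
  have hHnn : ∀ j z, 0 ≤ H j z := fun j z =>
    div_nonneg (Real.rpow_nonneg (abs_nonneg _) _) (hd0 z)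
  have hKnn : ∀ z, 0 ≤ K z := fun z =>
    div_nonneg (Real.rpow_nonneg (abs_nonneg _) _) (hd0 z)
  -- a.e. statements transfer to the product
  have prod_ae : ∀ (P : (Fin N → ℝ) → Prop), (∀ᵐ x, P x) →
      ∀ᵐ z : (Fin N → ℝ) × (Fin N → ℝ), P z.1 ∧ P z.2 := by
    intro P hP
    rw [ae_iff] at hP
    obtain ⟨T, hTsub, hTm, hT0⟩ := exists_measurable_superset_of_null hP
    rw [ae_iff]
    refine measure_mono_null (fun z hz => ?_)
      (?_ : volume ((T ×ˢ Set.univ) ∪ (Set.univ ×ˢ T)) = 0)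
    · simp only [Set.mem_setOf_eq, not_and_or] at hz
      rcases hz with h | h
      · exact Or.inl ⟨hTsub h, Set.mem_univ _⟩
      · exact Or.inr ⟨Set.mem_univ _, hTsub h⟩
    · refine measure_union_null ?_ ?_
      · rw [Measure.volume_eq_prod, Measure.prod_prod, hT0, zero_mul]
      · rw [Measure.volume_eq_prod, Measure.prod_prod, hT0, mul_zero]
  have haeP := prod_ae _ hae
  -- pointwise convergence of G and H
  have hGK : ∀ᵐ z : (Fin N → ℝ) × (Fin N → ℝ),
      Tendsto (fun j => G j z) atTop (𝓝 (K z)) ∧ Tendsto (fun j => H j z) atTop (𝓝 0) := by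
    filter_upwards [haeP] with z hz
    obtain ⟨h1, h2⟩ := hz
    constructor
    · have ht : Tendsto (fun j => |u j z.1 - u j z.2| ^ p) atTop
          (𝓝 (|v z.1 - v z.2| ^ p)) := ((h1.sub h2).abs).rpow_const (Or.inr hp0.le)
      simpa only [hG, hK] using ht.div_const (d z)
    · have ha : Tendsto (fun j => u j z.1 - v z.1) atTop (𝓝 (v z.1 - v z.1)) :=
        h1.sub tendsto_const_nhds
      have hb : Tendsto (fun j => u j z.2 - v z.2) atTop (𝓝 (v z.2 - v z.2)) :=
        h2.sub tendsto_const_nhds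
      have h3 : Tendsto (fun j => (u j z.1 - v z.1) - (u j z.2 - v z.2)) atTop (𝓝 0) := by
        simpa using ha.sub hb
      have h4 : Tendsto (fun j => |(u j z.1 - v z.1) - (u j z.2 - v z.2)| ^ p) atTop
          (𝓝 (|(0:ℝ)| ^ p)) := h3.abs.rpow_const (Or.inr hp0.le)
      rw [abs_zero, Real.zero_rpow (ne_of_gt hp0)] at h4
      have := h4.div_const (d z)
      simpa only [hH, zero_div] using this
  -- Fatou: the limit has finite Gagliardo energy
  have hKfin : (∫⁻ z, ENNReal.ofReal (K z)) ≤ C0 := by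
    have hlim : ∀ᵐ z : (Fin N → ℝ) × (Fin N → ℝ),
        Tendsto (fun j => ENNReal.ofReal (G j z)) atTop (𝓝 (ENNReal.ofReal (K z))) := by
      filter_upwards [hGK] with z hz using ENNReal.tendsto_ofReal hz.1
    calc (∫⁻ z, ENNReal.ofReal (K z))
        = ∫⁻ z, liminf (fun j => ENNReal.ofReal (G j z)) atTop := by
          refine lintegral_congr_ae ?_
          filter_upwards [hlim] with z hz using hz.liminf_eq.symm
      _ ≤ liminf (fun j => ∫⁻ z, ENNReal.ofReal (G j z)) atTop :=
          lintegral_liminf_le (fun j => ENNReal.measurable_ofReal.comp (hGm j))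
      _ ≤ C0 := by
          have hle : (fun j => ∫⁻ z, ENNReal.ofReal (G j z)) ≤ᶠ[atTop] fun _ => C0 :=
            Eventually.of_forall (fun j => by
              show (∫⁻ z, ENNReal.ofReal (G j z)) ≤ C0
              rw [← egG j]; exact hC0 j)
          calc liminf (fun j => ∫⁻ z, ENNReal.ofReal (G j z)) atTop
              ≤ liminf (fun _ => C0) atTop := liminf_le_liminf hle
            _ = C0 := liminf_const _
  -- integrability helper
  have intg : ∀ f : (Fin N → ℝ) × (Fin N → ℝ) → ℝ, Measurable f → (∀ z, 0 ≤ f z) →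
      (∫⁻ z, ENNReal.ofReal (f z)) < ⊤ → Integrable f := by
    intro f hm h0 hfin
    refine ⟨hm.aestronglyMeasurable, ?_⟩
    rw [hasFiniteIntegral_iff_ofReal (Eventually.of_forall h0)]
    exact hfin
  have hGint : ∀ j, Integrable (G j) := fun j =>
    intg _ (hGm j) (hGnn j) (by rw [← egG j]; exact lt_of_le_of_lt (hC0 j) hC0top)
  have hKint : Integrable K := intg _ hKm (hKnn) (lt_of_le_of_lt hKfin hC0top)
  -- bound on H
  have h2nn : (0:ℝ) ≤ 2 ^ (p - 1) := Real.rpow_nonneg (by norm_num) _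
  have hHle : ∀ j z, H j z ≤ 2 ^ (p - 1) * G j z + 2 ^ (p - 1) * K z := by
    intro j z
    have hnum : |(u j z.1 - v z.1) - (u j z.2 - v z.2)| ^ p ≤
        2 ^ (p - 1) * (|u j z.1 - u j z.2| ^ p + |v z.1 - v z.2| ^ p) := by
      have e : (u j z.1 - v z.1) - (u j z.2 - v z.2)
          = (u j z.1 - u j z.2) + (v z.2 - v z.1) := by ring
      rw [e]
      have h2 := BL_two_ineq hp.le (u j z.1 - u j z.2) (v z.2 - v z.1)
      rwa [abs_sub_comm (v z.2) (v z.1)] at h2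
    have hdiv := div_le_div_of_nonneg_right hnum (hd0 z)
    calc H j z ≤ (2 ^ (p - 1) * (|u j z.1 - u j z.2| ^ p + |v z.1 - v z.2| ^ p)) / d z := hdiv
      _ = 2 ^ (p - 1) * G j z + 2 ^ (p - 1) * K z := by
          simp only [hG, hK]
          rw [mul_add, add_div, mul_div_assoc, mul_div_assoc]
  have hHfin : ∀ j, (∫⁻ z, ENNReal.ofReal (H j z)) ≤ ENNReal.ofReal (2 ^ (p - 1)) * (C0 + C0) := by
    intro j
    have step : (∫⁻ z, ENNReal.ofReal (H j z)) ≤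
        ∫⁻ z, ENNReal.ofReal (2 ^ (p - 1)) * (ENNReal.ofReal (G j z) + ENNReal.ofReal (K z)) := by
      refine lintegral_mono (fun z => ?_)
      calc ENNReal.ofReal (H j z)
          ≤ ENNReal.ofReal (2 ^ (p - 1) * G j z + 2 ^ (p - 1) * K z) :=
            ENNReal.ofReal_le_ofReal (hHle j z)
        _ = ENNReal.ofReal (2 ^ (p - 1)) * (ENNReal.ofReal (G j z) + ENNReal.ofReal (K z)) := by
            rw [ENNReal.ofReal_add (mul_nonneg h2nn (hGnn j z)) (mul_nonneg h2nn (hKnn z)),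
              ENNReal.ofReal_mul h2nn, ENNReal.ofReal_mul h2nn, mul_add]
    refine step.trans ?_
    have m1 : Measurable fun z : (Fin N → ℝ) × (Fin N → ℝ) => ENNReal.ofReal (G j z) :=
      ENNReal.measurable_ofReal.comp (hGm j)
    have m2 : Measurable fun z : (Fin N → ℝ) × (Fin N → ℝ) => ENNReal.ofReal (K z) :=
      ENNReal.measurable_ofReal.comp hKm
    rw [lintegral_const_mul (f := fun z => ENNReal.ofReal (G j z) + ENNReal.ofReal (K z)) _ (m1.add m2), lintegral_add_left m1]
    exact mul_le_mul_right (add_le_add (by rw [← egG j]; exact hC0 j) hKfin) _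
  have hHtop : ENNReal.ofReal (2 ^ (p - 1)) * (C0 + C0) < ⊤ := by
    refine ENNReal.mul_lt_top ?_ ?_
    · exact ENNReal.ofReal_lt_top
    · exact ENNReal.add_lt_top.2 ⟨hC0top, hC0top⟩
  have hHint : ∀ j, Integrable (H j) := fun j =>
    intg _ (hHm j) (hHnn j) (lt_of_le_of_lt (hHfin j) hHtop)
  set M : ℝ := (ENNReal.ofReal (2 ^ (p - 1)) * (C0 + C0)).toReal with hMdef
  have hM0 : 0 ≤ M := ENNReal.toReal_nonneg
  have hHM : ∀ j, (∫ z, H j z) ≤ M := by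
    intro j
    rw [integral_eq_lintegral_of_nonneg_ae (Eventually.of_forall (hHnn j))
      (hHm j).aestronglyMeasurable]
    exact ENNReal.toReal_mono (ne_of_lt hHtop) (hHfin j)
  -- rewrite the goal as real integrals
  have hGtoReal : ∀ j, (gagPow N s p (u j)).toReal = ∫ z, G j z := fun j => by
    rw [integral_eq_lintegral_of_nonneg_ae (Eventually.of_forall (hGnn j))
      (hGm j).aestronglyMeasurable, ← egG j]
  have hHtoReal : ∀ j, (gagPow N s p (fun x => u j x - v x)).toReal = ∫ z, H j z := fun j => by
    rw [integral_eq_lintegral_of_nonneg_ae (Eventually.of_forall (hHnn j))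
      (hHm j).aestronglyMeasurable, ← egH j]
  have hKtoReal : (gagPow N s p v).toReal = ∫ z, K z := by
    rw [integral_eq_lintegral_of_nonneg_ae (Eventually.of_forall hKnn)
      hKm.aestronglyMeasurable, ← egK]
  have hgoal : (fun j => (gagPow N s p (u j)).toReal
      - (gagPow N s p (fun x => u j x - v x)).toReal - (gagPow N s p v).toReal)
      = fun j => ∫ z, (G j z - H j z - K z) := by
    funext j
    have e3 : (∫ z, (G j z - H j z - K z))
        = (∫ z, G j z) - (∫ z, H j z) - ∫ z, K z := by
      have i1 := integral_sub (hGint j) (hHint j)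
      have i2 := integral_sub ((hGint j).sub (hHint j)) hKint
      simp only [Pi.sub_apply] at i2
      rw [i2, i1]
    rw [hGtoReal j, hHtoReal j, hKtoReal, e3]
  rw [hgoal, NormedAddCommGroup.tendsto_nhds_zero]
  intro ε hε
  set ε₀ : ℝ := ε / (2 * (M + 1)) with hε₀def
  have hε₀ : 0 < ε₀ := div_pos hε (by linarith)
  obtain ⟨C, hCnn, hkey⟩ := BL_key_ineq hp hε₀
  have hptw : ∀ j z, |G j z - H j z - K z| ≤ ε₀ * H j z + C * K z := by
    intro j z
    have e1 : u j z.1 - u j z.2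
        = ((u j z.1 - v z.1) - (u j z.2 - v z.2)) + (v z.1 - v z.2) := by ring
    have hk := hkey ((u j z.1 - v z.1) - (u j z.2 - v z.2)) (v z.1 - v z.2)
    rw [← e1] at hk
    have e2 : G j z - H j z - K z
        = (|u j z.1 - u j z.2| ^ p - |(u j z.1 - v z.1) - (u j z.2 - v z.2)| ^ p
            - |v z.1 - v z.2| ^ p) / d z := by
      simp only [hG, hH, hK]
      rw [_root_.sub_div, _root_.sub_div]
    rw [e2, abs_div, abs_of_nonneg (hd0 z)]
    calc |(|u j z.1 - u j z.2| ^ p - |(u j z.1 - v z.1) - (u j z.2 - v z.2)| ^ p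
            - |v z.1 - v z.2| ^ p)| / d z
        ≤ (ε₀ * |(u j z.1 - v z.1) - (u j z.2 - v z.2)| ^ p + C * |v z.1 - v z.2| ^ p) / d z :=
          div_le_div_of_nonneg_right hk (hd0 z)
      _ = ε₀ * H j z + C * K z := by
          simp only [hH, hK]
          rw [add_div, mul_div_assoc, mul_div_assoc]
  set W : ℕ → (Fin N → ℝ) × (Fin N → ℝ) → ℝ :=
    fun j z => max (|G j z - H j z - K z| - ε₀ * H j z) 0 with hW
  have hWnn : ∀ j z, 0 ≤ W j z := fun j z => le_max_right _ _
  have hWle : ∀ j z, W j z ≤ C * K z := fun j z =>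
    max_le (by have := hptw j z; linarith) (mul_nonneg hCnn (hKnn z))
  have hWm : ∀ j, AEStronglyMeasurable (W j) volume := fun j =>
    (((((hGm j).sub (hHm j)).sub hKm).abs.sub ((hHm j).const_mul ε₀)).max
      measurable_const).aestronglyMeasurable
  have hWtend : ∀ᵐ z : (Fin N → ℝ) × (Fin N → ℝ),
      Tendsto (fun j => W j z) atTop (𝓝 0) := by
    filter_upwards [hGK] with z hz
    have h1 : Tendsto (fun j => |G j z - H j z - K z| - ε₀ * H j z) atTop
        (𝓝 (|K z - 0 - K z| - ε₀ * 0)) :=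
      (((hz.1.sub hz.2).sub tendsto_const_nhds).abs).sub (hz.2.const_mul ε₀)
    simp only [sub_zero, sub_self, abs_zero, mul_zero] at h1
    have h2 := h1.max (tendsto_const_nhds : Tendsto (fun _ : ℕ => (0:ℝ)) atTop (𝓝 0))
    simpa [max_self] using h2
  have hWbd : ∀ j, ∀ᵐ z : (Fin N → ℝ) × (Fin N → ℝ), ‖W j z‖ ≤ C * K z := fun j =>
    Eventually.of_forall (fun z => by
      rw [Real.norm_eq_abs, abs_of_nonneg (hWnn j z)]; exact hWle j z)
  have hWint0 : Tendsto (fun j => ∫ z, W j z) atTop (𝓝 (∫ _ : (Fin N → ℝ) × (Fin N → ℝ), (0:ℝ))) :=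
    tendsto_integral_of_dominated_convergence (fun z => C * K z) hWm (hKint.const_mul C)
      hWbd hWtend
  rw [integral_zero] at hWint0
  have hev : ∀ᶠ j in atTop, (∫ z, W j z) < ε / 2 :=
    hWint0.eventually_lt_const (by linarith)
  filter_upwards [hev] with j hj
  rw [Real.norm_eq_abs]
  have habs : |∫ z, (G j z - H j z - K z)| ≤ ∫ z, |G j z - H j z - K z| := by
    simpa [Real.norm_eq_abs] using
      norm_integral_le_integral_norm (fun z => G j z - H j z - K z)
  have hintabs : Integrable (fun z => |G j z - H j z - K z|) :=
    (((hGint j).sub (hHint j)).sub hKint).abs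
  have hWint : Integrable (W j) :=
    (hKint.const_mul C).mono' (hWm j) (hWbd j)
  have hmono : (∫ z, |G j z - H j z - K z|) ≤ ∫ z, (W j z + ε₀ * H j z) := by
    refine integral_mono hintabs (hWint.add ((hHint j).const_mul ε₀)) (fun z => ?_)
    have := le_max_left (|G j z - H j z - K z| - ε₀ * H j z) 0
    simp only [hW]
    linarith
  have hsplit : (∫ z, (W j z + ε₀ * H j z)) = (∫ z, W j z) + ε₀ * ∫ z, H j z := by
    rw [integral_add hWint ((hHint j).const_mul ε₀), integral_const_mul]
  have hfin2 : ε₀ * (∫ z, H j z) ≤ ε₀ * M := mul_le_mul_of_nonneg_left (hHM j) hε₀.le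
  have hfin3 : ε₀ * M < ε / 2 := by
    have he : ε₀ * (M + 1) = ε / 2 := by
      rw [hε₀def]; field_simp
    have he2 : ε₀ * (M + 1) = ε₀ * M + ε₀ := by ring
    linarith
  linarith
end

section
/- Let p ∈ (1,∞), s ∈ (0,1), N > sp. If u, v ∈ W^{s,p}(ℝ^N) both vanish a.e. outside a domain Ω and the equality A(u)(v) = [u]_{s,p}^{p−1}[v]_{s,p} holds, where A(u)(v) = ∫∫ |u(x)−u(y)|^{p−2}(u(x)−u(y))(v(x)−v(y))/|x−y|^{N+sp} dx dy, then there exist α, β ≥ 0, not both zero, with α·u = β·v almost everywhere. -/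
open MeasureTheory Filter Topology ENNReal NNReal

/-! ### Auxiliary lemmas -/

section Aux

lemma rpow_right_inj' {x y p : ℝ} (hx : 0 ≤ x) (hy : 0 ≤ y) (hp : 0 < p)
    (h : x ^ p = y ^ p) : x = y := by
  rcases lt_trichotomy x y with hlt | heq | hgt
  · exact absurd h (ne_of_lt (Real.rpow_lt_rpow hx hlt hp))
  · exact heq
  · exact absurd h.symm (ne_of_lt (Real.rpow_lt_rpow hy hgt hp))

/-- Equality case of Young's inequality. -/
lemma young_eq {p q a b : ℝ} (hpq : Real.HolderConjugate p q) (ha : 0 ≤ a) (hb : 0 ≤ b)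
    (h : a * b = a ^ p / p + b ^ q / q) : a ^ p = b ^ q := by
  rcases ha.eq_or_lt with ha0 | ha0
  · rw [← ha0] at h ⊢
    rw [Real.zero_rpow hpq.ne_zero] at h ⊢
    have hb0 : b ^ q = 0 := by
      have h' : b ^ q / q = 0 := by simpa using h.symm
      rcases div_eq_zero_iff.1 h' with h'' | h''
      · exact h''
      · exact absurd h'' hpq.symm.ne_zero
    rw [hb0]
  rcases hb.eq_or_lt with hb0 | hb0
  · rw [← hb0] at h ⊢
    rw [Real.zero_rpow hpq.symm.ne_zero] at h ⊢
    have h' : a ^ p / p = 0 := by simpa using h.symm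
    rcases div_eq_zero_iff.1 h' with h'' | h''
    · rw [h'']
    · exact absurd h'' hpq.ne_zero
  by_contra hne
  have hx : a ^ p ∈ Set.Ioi (0:ℝ) := Set.mem_Ioi.2 (Real.rpow_pos_of_pos ha0 p)
  have hy : b ^ q ∈ Set.Ioi (0:ℝ) := Set.mem_Ioi.2 (Real.rpow_pos_of_pos hb0 q)
  have hconc := strictConcaveOn_log_Ioi.2 hx hy hne hpq.inv_pos hpq.symm.inv_pos
    hpq.inv_add_inv_eq_one
  rw [smul_eq_mul, smul_eq_mul, smul_eq_mul, smul_eq_mul, Real.log_rpow ha0,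
    Real.log_rpow hb0] at hconc
  have hlhs : p⁻¹ * (p * Real.log a) + q⁻¹ * (q * Real.log b) = Real.log (a * b) := by
    rw [Real.log_mul ha0.ne' hb0.ne']
    field_simp [hpq.ne_zero, hpq.symm.ne_zero]
  have hrhs : p⁻¹ * a ^ p + q⁻¹ * b ^ q = a * b := by
    rw [h, div_eq_mul_inv, div_eq_mul_inv]; ring
  rw [hlhs, hrhs] at hconc
  exact lt_irrefl _ hconc

/-- Pointwise Young inequality with parameter `c`, together with its equality case. -/
lemma young_pointwise {p q c F G : ℝ} (hpq : Real.HolderConjugate p q) (hc : 0 < c)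
    (hF : 0 ≤ F) (hG : 0 ≤ G) :
    F ^ (p - 1) * G ≤ (1 / q) * (c * F ^ p) + (1 / p) * (c ^ (1 - p) * G ^ p)
    ∧ (F ^ (p - 1) * G = (1 / q) * (c * F ^ p) + (1 / p) * (c ^ (1 - p) * G ^ p)
        → G = c * F) := by
  have hq0 : q ≠ 0 := hpq.symm.ne_zero
  have hcq : (0:ℝ) < c ^ (1 / q) := Real.rpow_pos_of_pos hc _
  set a := c ^ (1 / q) * F ^ (p - 1) with ha_def
  set b := G / c ^ (1 / q) with hb_def
  have ha0 : 0 ≤ a := mul_nonneg hcq.le (Real.rpow_nonneg hF _)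
  have hb0 : 0 ≤ b := div_nonneg hG hcq.le
  have hab : a * b = F ^ (p - 1) * G := by
    rw [ha_def, hb_def]; field_simp
  have haq : a ^ q = c * F ^ p := by
    rw [ha_def, Real.mul_rpow hcq.le (Real.rpow_nonneg hF _), ← Real.rpow_mul hc.le,
      ← Real.rpow_mul hF, one_div_mul_cancel hq0, Real.rpow_one, hpq.sub_one_mul_conj]
  have hbp : b ^ p = c ^ (1 - p) * G ^ p := by
    rw [hb_def, Real.div_rpow hG hcq.le, ← Real.rpow_mul hc.le]
    have h1 : 1 / q * p = p - 1 := by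
      rw [div_mul_eq_mul_div, one_mul, hpq.div_conj_eq_sub_one]
    rw [h1]
    have h2 : c ^ (1 - p) = (c ^ (p - 1))⁻¹ := by
      rw [← Real.rpow_neg hc.le]; ring_nf
    rw [h2, div_eq_mul_inv, mul_comm]
  have young := Real.young_inequality_of_nonneg ha0 hb0 hpq.symm
  rw [hab, haq, hbp] at young
  constructor
  · calc F ^ (p - 1) * G ≤ c * F ^ p / q + c ^ (1 - p) * G ^ p / p := young
      _ = (1 / q) * (c * F ^ p) + (1 / p) * (c ^ (1 - p) * G ^ p) := by ring
  · intro heq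
    have heq' : a * b = a ^ q / q + b ^ p / p := by
      rw [hab, haq, hbp, heq]; ring
    have hkey := young_eq hpq.symm ha0 hb0 heq'
    rw [haq, hbp] at hkey
    have e2 : c ^ (p - 1) * c = c ^ p := by
      have e := Real.rpow_add_one hc.ne' (p - 1)
      rw [show p - 1 + 1 = p by ring] at e
      exact e.symm
    have e3 : c ^ (p - 1) * c ^ (1 - p) = 1 := by
      rw [← Real.rpow_add hc, show p - 1 + (1 - p) = 0 by ring, Real.rpow_zero]
    have e4 : (c * F) ^ p = G ^ p := by
      rw [Real.mul_rpow hc.le hF]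
      linear_combination c ^ (p - 1) * hkey - F ^ p * e2 + G ^ p * e3
    exact (rpow_right_inj' (mul_nonneg hc.le hF) hG hpq.pos e4).symm

/-- Arithmetic identities for the optimal constant in Hölder's inequality. -/
lemma holder_const_arith {p A B : ℝ} (hp : 1 < p) (hA : 0 < A) (hB : 0 < B) :
    (B / A) ^ ((1:ℝ)/p) * A = A ^ ((p-1)/p) * B ^ ((1:ℝ)/p)
    ∧ ((B / A) ^ ((1:ℝ)/p)) ^ (1 - p) * B = A ^ ((p-1)/p) * B ^ ((1:ℝ)/p) := by
  have hp0 : (0:ℝ) < p := lt_trans zero_lt_one hp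
  have hX : (0:ℝ) < A ^ ((1:ℝ)/p) := Real.rpow_pos_of_pos hA _
  have hY : (0:ℝ) < B ^ ((1:ℝ)/p) := Real.rpow_pos_of_pos hB _
  have hXp1 : A ^ ((p-1)/p) = (A ^ ((1:ℝ)/p)) ^ (p-1) := by
    rw [← Real.rpow_mul hA.le]; congr 1; ring
  have hYp1 : B ^ ((p-1)/p) = (B ^ ((1:ℝ)/p)) ^ (p-1) := by
    rw [← Real.rpow_mul hB.le]; congr 1; ring
  have hXA : (A ^ ((1:ℝ)/p)) ^ (p - 1) * A ^ ((1:ℝ)/p) = A := by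
    have e := Real.rpow_add_one hX.ne' (p - 1)
    rw [show p - 1 + 1 = p by ring] at e
    rw [← e, ← Real.rpow_mul hA.le, one_div_mul_cancel hp0.ne', Real.rpow_one]
  have hYB : (B ^ ((1:ℝ)/p)) ^ (p - 1) * B ^ ((1:ℝ)/p) = B := by
    have e := Real.rpow_add_one hY.ne' (p - 1)
    rw [show p - 1 + 1 = p by ring] at e
    rw [← e, ← Real.rpow_mul hB.le, one_div_mul_cancel hp0.ne', Real.rpow_one]
  have hcXY : (B / A) ^ ((1:ℝ)/p) = B ^ ((1:ℝ)/p) / A ^ ((1:ℝ)/p) :=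
    Real.div_rpow hB.le hA.le _
  constructor
  · rw [hcXY, hXp1, div_mul_eq_mul_div, div_eq_iff hX.ne']
    linear_combination B ^ ((1:ℝ)/p) * hXA.symm
  · have hc1p : ((B / A) ^ ((1:ℝ)/p)) ^ (1 - p)
        = (A ^ ((1:ℝ)/p)) ^ (p-1) / (B ^ ((1:ℝ)/p)) ^ (p-1) := by
      rw [hcXY, Real.div_rpow hY.le hX.le,
        show (1:ℝ) - p = -(p-1) by ring, Real.rpow_neg hY.le, Real.rpow_neg hX.le]
      field_simp
    have hYp1pos : (0:ℝ) < (B ^ ((1:ℝ)/p)) ^ (p-1) := Real.rpow_pos_of_pos hY _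
    rw [hc1p, hXp1, div_mul_eq_mul_div, div_eq_iff hYp1pos.ne']
    linear_combination (A ^ ((1:ℝ)/p)) ^ (p-1) * hYB.symm

/-- Equality case of Hölder's inequality for integrals. -/
lemma holder_eq_aux {α : Type*} [MeasurableSpace α] {μ : Measure α} {p : ℝ} (hp : 1 < p)
    {f g h : α → ℝ} (hf : Measurable f) (hg : Measurable g) (hh : Measurable h)
    (hf0 : ∀ x, 0 ≤ f x) (hg0 : ∀ x, 0 ≤ g x)
    (habs : ∀ x, |h x| = f x ^ (p - 1) * g x)
    {A B : ℝ} (hA : 0 < A) (hB : 0 < B)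
    (hfA : ∫⁻ x, ENNReal.ofReal (f x ^ p) ∂μ = ENNReal.ofReal A)
    (hgB : ∫⁻ x, ENNReal.ofReal (g x ^ p) ∂μ = ENNReal.ofReal B)
    (hint : ∫ x, h x ∂μ = A ^ ((p - 1) / p) * B ^ ((1:ℝ) / p)) :
    ∀ᵐ x ∂μ, g x = (B / A) ^ ((1:ℝ) / p) * f x ∧ h x = |h x| := by
  have hp0 : (0:ℝ) < p := lt_trans zero_lt_one hp
  have hpq : p.HolderConjugate (Real.conjExponent p) := Real.HolderConjugate.conjExponent hp
  set q := Real.conjExponent p with hq_def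
  set c := (B / A) ^ ((1:ℝ) / p) with hc_def
  have hc : 0 < c := Real.rpow_pos_of_pos (div_pos hB hA) _
  have hfpm : Measurable fun x => f x ^ p := by fun_prop
  have hgpm : Measurable fun x => g x ^ p := by fun_prop
  have hfpint : Integrable (fun x => f x ^ p) μ := by
    refine ⟨hfpm.aestronglyMeasurable, ?_⟩
    rw [hasFiniteIntegral_iff_ofReal (ae_of_all _ fun x => Real.rpow_nonneg (hf0 x) p), hfA]
    exact ofReal_lt_top
  have hgpint : Integrable (fun x => g x ^ p) μ := by
    refine ⟨hgpm.aestronglyMeasurable, ?_⟩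
    rw [hasFiniteIntegral_iff_ofReal (ae_of_all _ fun x => Real.rpow_nonneg (hg0 x) p), hgB]
    exact ofReal_lt_top
  have hIfp : ∫ x, f x ^ p ∂μ = A := by
    rw [integral_eq_lintegral_of_nonneg_ae (ae_of_all _ fun x => Real.rpow_nonneg (hf0 x) p)
      hfpm.aestronglyMeasurable, hfA, toReal_ofReal hA.le]
  have hIgp : ∫ x, g x ^ p ∂μ = B := by
    rw [integral_eq_lintegral_of_nonneg_ae (ae_of_all _ fun x => Real.rpow_nonneg (hg0 x) p)
      hgpm.aestronglyMeasurable, hgB, toReal_ofReal hB.le]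
  set ψ : α → ℝ := fun x => (1 / q) * (c * f x ^ p) + (1 / p) * (c ^ (1 - p) * g x ^ p)
    with hψ_def
  have hyoung := fun x => young_pointwise (c := c) hpq hc (hf0 x) (hg0 x)
  have hφ0 : ∀ x, 0 ≤ ψ x - f x ^ (p - 1) * g x := fun x => sub_nonneg.2 (hyoung x).1
  have hψint : Integrable ψ μ :=
    ((hfpint.const_mul c).const_mul (1 / q)).add
      ((hgpint.const_mul (c ^ (1 - p))).const_mul (1 / p))
  have hprodm : Measurable fun x => f x ^ (p - 1) * g x := by fun_prop
  have hprod0 : ∀ x, 0 ≤ f x ^ (p - 1) * g x := fun x =>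
    mul_nonneg (Real.rpow_nonneg (hf0 x) _) (hg0 x)
  have hprodint : Integrable (fun x => f x ^ (p - 1) * g x) μ := by
    refine hψint.mono' hprodm.aestronglyMeasurable (ae_of_all _ fun x => ?_)
    rw [Real.norm_eq_abs, abs_of_nonneg (hprod0 x)]
    linarith [hφ0 x]
  have hφint : Integrable (fun x => ψ x - f x ^ (p - 1) * g x) μ := hψint.sub hprodint
  have hhint : Integrable h μ := by
    refine hprodint.mono' hh.aestronglyMeasurable (ae_of_all _ fun x => ?_)
    rw [Real.norm_eq_abs, habs x]
  have h_le : ∫ x, h x ∂μ ≤ ∫ x, f x ^ (p - 1) * g x ∂μ := by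
    refine integral_mono hhint hprodint fun x => ?_
    calc h x ≤ |h x| := le_abs_self _
      _ = f x ^ (p - 1) * g x := habs x
  obtain ⟨hcA, hcB⟩ := holder_const_arith hp hA hB
  rw [← hc_def] at hcA hcB
  have hIψ : ∫ x, ψ x ∂μ = A ^ ((p - 1) / p) * B ^ ((1:ℝ) / p) := by
    rw [hψ_def]
    rw [integral_add ((hfpint.const_mul c).const_mul (1 / q))
      ((hgpint.const_mul (c ^ (1 - p))).const_mul (1 / p))]
    rw [integral_const_mul, integral_const_mul, integral_const_mul, integral_const_mul,
      hIfp, hIgp]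
    have hsum : 1 / p + 1 / q = 1 := by
      rw [one_div, one_div]; exact hpq.inv_add_inv_eq_one
    calc 1 / q * (c * A) + 1 / p * (c ^ (1 - p) * B)
        = 1 / q * (A ^ ((p - 1) / p) * B ^ ((1:ℝ) / p))
          + 1 / p * (A ^ ((p - 1) / p) * B ^ ((1:ℝ) / p)) := by rw [hcA, hcB]
      _ = (1 / p + 1 / q) * (A ^ ((p - 1) / p) * B ^ ((1:ℝ) / p)) := by ring
      _ = A ^ ((p - 1) / p) * B ^ ((1:ℝ) / p) := by rw [hsum, one_mul]
  have hIφ : ∫ x, (ψ x - f x ^ (p - 1) * g x) ∂μ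
      = A ^ ((p - 1) / p) * B ^ ((1:ℝ) / p) - ∫ x, f x ^ (p - 1) * g x ∂μ := by
    rw [integral_sub hψint hprodint, hIψ]
  have hIφ_nonneg : 0 ≤ ∫ x, (ψ x - f x ^ (p - 1) * g x) ∂μ :=
    integral_nonneg hφ0
  have hIprod_ge : A ^ ((p - 1) / p) * B ^ ((1:ℝ) / p)
      ≤ ∫ x, f x ^ (p - 1) * g x ∂μ := by
    rw [← hint]; exact h_le
  have hIφ_zero : ∫ x, (ψ x - f x ^ (p - 1) * g x) ∂μ = 0 := by
    linarith [hIφ, hIφ_nonneg, hIprod_ge]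
  have hIprod : ∫ x, f x ^ (p - 1) * g x ∂μ = A ^ ((p - 1) / p) * B ^ ((1:ℝ) / p) := by
    linarith [hIφ, hIφ_zero]
  have hdiffint : Integrable (fun x => f x ^ (p - 1) * g x - h x) μ := hprodint.sub hhint
  have hdiff0 : ∀ x, 0 ≤ f x ^ (p - 1) * g x - h x := fun x => by
    rw [← habs x]; linarith [le_abs_self (h x)]
  have hIdiff : ∫ x, (f x ^ (p - 1) * g x - h x) ∂μ = 0 := by
    rw [integral_sub hprodint hhint, hIprod, hint]
    ring
  have hdiff_ae : ∀ᵐ x ∂μ, f x ^ (p - 1) * g x - h x = 0 := by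
    have hh' := (integral_eq_zero_iff_of_nonneg hdiff0 hdiffint).1 hIdiff
    filter_upwards [hh'] with x hx using hx
  have hφ_ae : ∀ᵐ x ∂μ, ψ x - f x ^ (p - 1) * g x = 0 := by
    have hh' := (integral_eq_zero_iff_of_nonneg hφ0 hφint).1 hIφ_zero
    filter_upwards [hh'] with x hx using hx
  filter_upwards [hdiff_ae, hφ_ae] with x hx1 hx2
  constructor
  · apply (hyoung x).2
    have hx2' : ψ x = f x ^ (p - 1) * g x := by linarith [hx2]
    rw [hψ_def] at hx2'
    linarith [hx2']
  · rw [habs x]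
    linarith [hx1]

end Aux

section Geometry

variable (N : ℕ)

lemma vol_univ_top (hN : 0 < N) : (volume : Measure (Fin N → ℝ)) Set.univ = ⊤ := by
  haveI : Nonempty (Fin N) := ⟨⟨0, hN⟩⟩
  haveI : Nontrivial (Fin N → ℝ) := by
    refine ⟨0, fun _ => 1, fun h => ?_⟩
    simpa using congrFun h ⟨0, hN⟩
  exact measure_univ_of_isAddLeftInvariant volume

lemma vol_ne_zero (hN : 0 < N) : (volume : Measure (Fin N → ℝ)) ≠ 0 := by
  intro h
  have h2 := vol_univ_top N hN
  rw [h] at h2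
  simp at h2

lemma diag_null (hN : 0 < N) :
    (volume : Measure ((Fin N → ℝ) × (Fin N → ℝ))) {z | z.1 = z.2} = 0 := by
  haveI : Nonempty (Fin N) := ⟨⟨0, hN⟩⟩
  rw [Measure.volume_eq_prod,
    Measure.prod_apply (measurableSet_eq_fun measurable_fst measurable_snd)]
  have hsec : ∀ x : Fin N → ℝ,
      (volume : Measure (Fin N → ℝ))
        (Prod.mk x ⁻¹' {z : (Fin N → ℝ) × (Fin N → ℝ) | z.1 = z.2}) = 0 := by
    intro x
    have he : Prod.mk x ⁻¹' {z : (Fin N → ℝ) × (Fin N → ℝ) | z.1 = z.2} = {x} := by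
      ext y; simp [eq_comm]
    rw [he]
    exact measure_singleton x
  simp [hsec]

/-- If `w ∈ L^p` and `w x = w y` for a.e. pair, then `w = 0` a.e. -/
lemma eq_zero_of_ae_eq_prod (hN : 0 < N) {p : ℝ} (hp : 0 < p) {w : (Fin N → ℝ) → ℝ}
    (hw : MemLp w (ENNReal.ofReal p) volume)
    (hdiag : ∀ᵐ z : (Fin N → ℝ) × (Fin N → ℝ), w z.1 = w z.2) :
    ∀ᵐ x : (Fin N → ℝ), w x = 0 := by
  have hμ0 : (volume : Measure (Fin N → ℝ)) ≠ 0 := vol_ne_zero N hN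
  rw [Measure.volume_eq_prod] at hdiag
  have h2 := Measure.ae_ae_of_ae_prod hdiag
  haveI : (ae (volume : Measure (Fin N → ℝ))).NeBot := ae_neBot.2 hμ0
  obtain ⟨x₀, hx₀⟩ := h2.exists
  have hconst : ∀ᵐ y : (Fin N → ℝ), w y = w x₀ := hx₀.mono fun y hy => hy.symm
  rcases eq_or_ne (w x₀) 0 with h0 | h0
  · filter_upwards [hconst] with y hy
    rw [hy, h0]
  · exfalso
    have hfin := hw.2
    have hcongr : w =ᵐ[volume] fun _ => w x₀ := hconst
    rw [eLpNorm_congr_ae hcongr] at hfin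
    have hpne : ENNReal.ofReal p ≠ 0 := by
      simp [ENNReal.ofReal_eq_zero, not_le, hp]
    rw [eLpNorm_const (w x₀) hpne hμ0, vol_univ_top N hN,
      toReal_ofReal hp.le] at hfin
    have h1p : (0:ℝ) < 1 / p := by positivity
    rw [ENNReal.top_rpow_of_pos h1p, ENNReal.mul_top (by simpa using h0)] at hfin
    exact lt_irrefl _ hfin

end Geometry

section Pointwise

/-- Pointwise identity for the `p`-th power of the normalized difference quotient. -/
lemma fpow_eq {p : ℝ} (hp : 1 < p) (U K : ℝ) (hK : 0 ≤ K) :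
    (|U| / K ^ ((1:ℝ) / p)) ^ p = |U| ^ p / K := by
  have hp0 : (0:ℝ) < p := lt_trans zero_lt_one hp
  rw [Real.div_rpow (abs_nonneg U) (Real.rpow_nonneg hK _), ← Real.rpow_mul hK,
    one_div_mul_cancel hp0.ne', Real.rpow_one]

/-- Pointwise identity for the absolute value of the integrand of `Aform`. -/
lemma abs_h_eq {p : ℝ} (hp : 1 < p) (U V K : ℝ) (hK : 0 ≤ K) :
    |(|U| ^ (p - 2) * U * V) / K|
      = (|U| / K ^ ((1:ℝ) / p)) ^ (p - 1) * (|V| / K ^ ((1:ℝ) / p)) := by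
  have hp0 : (0:ℝ) < p := lt_trans zero_lt_one hp
  have hp1 : p - 1 ≠ 0 := by intro h; linarith [sub_eq_zero.1 h]
  rcases hK.eq_or_lt with h0 | hKpos
  · rw [← h0]
    rw [Real.zero_rpow (by positivity : (1:ℝ)/p ≠ 0)]
    simp [Real.zero_rpow hp1]
  · have hKp : 0 < K ^ ((1:ℝ)/p) := Real.rpow_pos_of_pos hKpos _
    have hnum : |(|U| ^ (p - 2) * U * V)| = |U| ^ (p - 1) * |V| := by
      rw [abs_mul, abs_mul, abs_of_nonneg (Real.rpow_nonneg (abs_nonneg U) _)]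
      rcases eq_or_ne U 0 with hU | hU
      · simp [hU, Real.zero_rpow hp1]
      · have hUpos : 0 < |U| := abs_pos.2 hU
        have e := Real.rpow_add hUpos (p - 2) 1
        rw [Real.rpow_one, show p - 2 + 1 = p - 1 by ring] at e
        rw [← e]
    have habs : |(|U| ^ (p - 2) * U * V) / K| = |U| ^ (p - 1) * |V| / K := by
      rw [abs_div, hnum, abs_of_pos hKpos]
    have hden : (K ^ ((1:ℝ)/p)) ^ (p - 1) * K ^ ((1:ℝ)/p) = K := by
      rw [← Real.rpow_mul hKpos.le, ← Real.rpow_add hKpos,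
        show 1/p*(p-1) + 1/p = 1 by field_simp; ring, Real.rpow_one]
    rw [habs, Real.div_rpow (abs_nonneg U) hKp.le, div_mul_div_comm, hden]

/-- Recovering proportionality from the two a.e. equalities. -/
lemma recover {p c : ℝ} (hp : 1 < p) (hc : 0 < c) (U V K : ℝ) (hK : 0 < K)
    (h1 : |V| / K ^ ((1:ℝ)/p) = c * (|U| / K ^ ((1:ℝ)/p)))
    (h2 : |U| ^ (p - 2) * U * V / K = |(|U| ^ (p - 2) * U * V / K)|) :
    V = c * U := by
  have hKp : 0 < K ^ ((1:ℝ)/p) := Real.rpow_pos_of_pos hK _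
  have habsV : |V| = c * |U| := by
    rw [div_eq_iff hKp.ne'] at h1
    rw [h1]
    field_simp
  have hx : 0 ≤ |U| ^ (p - 2) * U * V / K := by
    rw [h2]; exact abs_nonneg _
  have hnum_nonneg : 0 ≤ |U| ^ (p - 2) * U * V := by
    have e := mul_nonneg hx hK.le
    rwa [div_mul_cancel₀ _ hK.ne'] at e
  rcases eq_or_ne U 0 with hU | hU
  · have hV0 : |V| = 0 := by rw [habsV, hU]; simp
    rw [abs_eq_zero.1 hV0, hU, mul_zero]
  · have hUpos : 0 < |U| := abs_pos.2 hU
    have hUp2 : 0 < |U| ^ (p - 2) := Real.rpow_pos_of_pos hUpos _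
    have hUV : 0 ≤ U * V := by
      by_contra hneg
      push_neg at hneg
      have : |U| ^ (p - 2) * (U * V) < 0 := mul_neg_of_pos_of_neg hUp2 hneg
      rw [← mul_assoc] at this
      linarith [hnum_nonneg]
    rcases hU.lt_or_gt with hUneg | hUposs
    · have hV : V ≤ 0 := by nlinarith [hUV]
      rw [abs_of_nonpos hV, abs_of_nonpos hUneg.le] at habsV
      linarith [habsV]
    · have hV : 0 ≤ V := by nlinarith [hUV]
      rw [abs_of_nonneg hV, abs_of_pos hUposs] at habsV
      exact habsV

end Pointwise

section GagZero

lemma gag_zero {N : ℕ} {s p : ℝ} (hp : 1 < p) (hs : 0 < s) (hN : s * p < (N : ℝ))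
    {u : (Fin N → ℝ) → ℝ} (hmeas : Measurable u)
    (hLp : MemLp u (ENNReal.ofReal p) volume) (h0 : gagPow N s p u = 0) :
    ∀ᵐ x : (Fin N → ℝ), u x = 0 := by
  have hp0 : (0:ℝ) < p := lt_trans zero_lt_one hp
  have hsp : (0:ℝ) < s * p := mul_pos hs hp0
  have hNposR : (0:ℝ) < N := lt_trans hsp hN
  have hNpos : 0 < N := by exact_mod_cast hNposR
  have hm : Measurable fun z : (Fin N → ℝ) × (Fin N → ℝ) =>
      ENNReal.ofReal (|u z.1 - u z.2| ^ p / dist z.1 z.2 ^ ((N : ℝ) + s * p)) := by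
    fun_prop
  simp only [gagPow] at h0
  have hae := (lintegral_eq_zero_iff hm).1 h0
  have hoff : ∀ᵐ z : (Fin N → ℝ) × (Fin N → ℝ), ¬ z.1 = z.2 :=
    measure_eq_zero_iff_ae_notMem.1 (diag_null N hNpos)
  have key : ∀ᵐ z : (Fin N → ℝ) × (Fin N → ℝ), u z.1 = u z.2 := by
    filter_upwards [hae, hoff] with z hz hne
    have hd : 0 < dist z.1 z.2 := dist_pos.2 hne
    have hdp : 0 < dist z.1 z.2 ^ ((N : ℝ) + s * p) := Real.rpow_pos_of_pos hd _
    have hle : |u z.1 - u z.2| ^ p / dist z.1 z.2 ^ ((N : ℝ) + s * p) ≤ 0 :=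
      ofReal_eq_zero.1 (by simpa using hz)
    have hnum : |u z.1 - u z.2| ^ p ≤ 0 := by
      rcases div_nonpos_iff.1 hle with ⟨_, h2'⟩ | ⟨h1', _⟩
      · linarith [hdp]
      · exact h1'
    have hzero : |u z.1 - u z.2| ^ p = 0 :=
      le_antisymm hnum (Real.rpow_nonneg (abs_nonneg _) _)
    have habs : |u z.1 - u z.2| = 0 := by
      by_contra hne2
      have hpos : 0 < |u z.1 - u z.2| := lt_of_le_of_ne (abs_nonneg _) (Ne.symm hne2)
      exact (Real.rpow_pos_of_pos hpos p).ne' hzero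
    have := abs_eq_zero.1 habs
    linarith [this]
  exact eq_zero_of_ae_eq_prod N hNpos hp0 hLp key

end GagZero

/-- Equality case in the Hölder inequality for the fractional `p`-Laplacian form:
if `u, v ∈ W^{s,p}(ℝ^N)` vanish a.e. outside `Ω` and
`A(u)(v) = [u]_{s,p}^{p−1}[v]_{s,p}`, then `αu = βv` a.e. for some `α, β ≥ 0` not both zero. -/
theorem Aform_equality_case (N : ℕ) (s p : ℝ) (hp : 1 < p) (hs : 0 < s) (hs1 : s < 1)
    (hN : s * p < (N : ℝ)) (Ω : Set (Fin N → ℝ)) (hΩo : IsOpen Ω)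
    (u v : (Fin N → ℝ) → ℝ) (hu : inX N s p Ω u) (hv : inX N s p Ω v)
    (heq : Aform N s p u v = gagNorm N s p u ^ (p - 1) * gagNorm N s p v) :
    ∃ α β : ℝ, 0 ≤ α ∧ 0 ≤ β ∧ ¬ (α = 0 ∧ β = 0) ∧
      ∀ᵐ x : (Fin N → ℝ), α * u x = β * v x := by
  classical
  have hp0 : (0:ℝ) < p := lt_trans zero_lt_one hp
  have hsp : (0:ℝ) < s * p := mul_pos hs hp0
  have hNposR : (0:ℝ) < N := lt_trans hsp hN
  have hNpos : 0 < N := by exact_mod_cast hNposR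
  have hmu : Measurable u := hu.1.1
  have hmv : Measurable v := hv.1.1
  rcases eq_or_ne (gagPow N s p u) 0 with h0u | h0u
  · refine ⟨1, 0, zero_le_one, le_refl 0, fun h' => one_ne_zero h'.1, ?_⟩
    filter_upwards [gag_zero hp hs hN hmu hu.1.2.1 h0u] with x hx
    rw [hx]; ring
  rcases eq_or_ne (gagPow N s p v) 0 with h0v | h0v
  · refine ⟨0, 1, le_refl 0, zero_le_one, fun h' => one_ne_zero h'.2, ?_⟩
    filter_upwards [gag_zero hp hs hN hmv hv.1.2.1 h0v] with x hx
    rw [hx]; ring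
  -- main case
  have hAfin : gagPow N s p u ≠ ⊤ := hu.1.2.2.ne
  have hBfin : gagPow N s p v ≠ ⊤ := hv.1.2.2.ne
  have hA : 0 < (gagPow N s p u).toReal := toReal_pos h0u hAfin
  have hB : 0 < (gagPow N s p v).toReal := toReal_pos h0v hBfin
  have hK0 : ∀ z : (Fin N → ℝ) × (Fin N → ℝ), 0 ≤ dist z.1 z.2 ^ ((N:ℝ) + s * p) :=
    fun z => Real.rpow_nonneg dist_nonneg _
  have hfm : Measurable fun z : (Fin N → ℝ) × (Fin N → ℝ) =>
      |u z.1 - u z.2| / (dist z.1 z.2 ^ ((N:ℝ) + s * p)) ^ ((1:ℝ)/p) := by fun_prop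
  have hgm : Measurable fun z : (Fin N → ℝ) × (Fin N → ℝ) =>
      |v z.1 - v z.2| / (dist z.1 z.2 ^ ((N:ℝ) + s * p)) ^ ((1:ℝ)/p) := by fun_prop
  have hhm : Measurable fun z : (Fin N → ℝ) × (Fin N → ℝ) =>
      |u z.1 - u z.2| ^ (p - 2) * (u z.1 - u z.2) * (v z.1 - v z.2)
        / dist z.1 z.2 ^ ((N:ℝ) + s * p) := by fun_prop
  have hf0 : ∀ z : (Fin N → ℝ) × (Fin N → ℝ),
      0 ≤ |u z.1 - u z.2| / (dist z.1 z.2 ^ ((N:ℝ) + s * p)) ^ ((1:ℝ)/p) :=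
    fun z => div_nonneg (abs_nonneg _) (Real.rpow_nonneg (hK0 z) _)
  have hg0 : ∀ z : (Fin N → ℝ) × (Fin N → ℝ),
      0 ≤ |v z.1 - v z.2| / (dist z.1 z.2 ^ ((N:ℝ) + s * p)) ^ ((1:ℝ)/p) :=
    fun z => div_nonneg (abs_nonneg _) (Real.rpow_nonneg (hK0 z) _)
  have habs : ∀ z : (Fin N → ℝ) × (Fin N → ℝ),
      |(|u z.1 - u z.2| ^ (p - 2) * (u z.1 - u z.2) * (v z.1 - v z.2)
          / dist z.1 z.2 ^ ((N:ℝ) + s * p))|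
        = (|u z.1 - u z.2| / (dist z.1 z.2 ^ ((N:ℝ) + s * p)) ^ ((1:ℝ)/p)) ^ (p - 1)
          * (|v z.1 - v z.2| / (dist z.1 z.2 ^ ((N:ℝ) + s * p)) ^ ((1:ℝ)/p)) :=
    fun z => abs_h_eq hp _ _ _ (hK0 z)
  have hfA : ∫⁻ z : (Fin N → ℝ) × (Fin N → ℝ),
      ENNReal.ofReal ((|u z.1 - u z.2|
        / (dist z.1 z.2 ^ ((N:ℝ) + s * p)) ^ ((1:ℝ)/p)) ^ p)
      = ENNReal.ofReal (gagPow N s p u).toReal := by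
    have e1 : ∫⁻ z : (Fin N → ℝ) × (Fin N → ℝ),
        ENNReal.ofReal ((|u z.1 - u z.2|
          / (dist z.1 z.2 ^ ((N:ℝ) + s * p)) ^ ((1:ℝ)/p)) ^ p)
        = gagPow N s p u := by
      simp only [gagPow]
      exact lintegral_congr fun z => by rw [fpow_eq hp _ _ (hK0 z)]
    rw [e1, ofReal_toReal hAfin]
  have hgB : ∫⁻ z : (Fin N → ℝ) × (Fin N → ℝ),
      ENNReal.ofReal ((|v z.1 - v z.2|
        / (dist z.1 z.2 ^ ((N:ℝ) + s * p)) ^ ((1:ℝ)/p)) ^ p)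
      = ENNReal.ofReal (gagPow N s p v).toReal := by
    have e1 : ∫⁻ z : (Fin N → ℝ) × (Fin N → ℝ),
        ENNReal.ofReal ((|v z.1 - v z.2|
          / (dist z.1 z.2 ^ ((N:ℝ) + s * p)) ^ ((1:ℝ)/p)) ^ p)
        = gagPow N s p v := by
      simp only [gagPow]
      exact lintegral_congr fun z => by rw [fpow_eq hp _ _ (hK0 z)]
    rw [e1, ofReal_toReal hBfin]
  have hint : ∫ z : (Fin N → ℝ) × (Fin N → ℝ),
      (|u z.1 - u z.2| ^ (p - 2) * (u z.1 - u z.2) * (v z.1 - v z.2)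
        / dist z.1 z.2 ^ ((N:ℝ) + s * p))
      = (gagPow N s p u).toReal ^ ((p - 1) / p)
        * (gagPow N s p v).toReal ^ ((1:ℝ) / p) := by
    have e1 : Aform N s p u v = ∫ z : (Fin N → ℝ) × (Fin N → ℝ),
        (|u z.1 - u z.2| ^ (p - 2) * (u z.1 - u z.2) * (v z.1 - v z.2)
          / dist z.1 z.2 ^ ((N:ℝ) + s * p)) := rfl
    rw [← e1, heq]
    simp only [gagNorm]
    rw [← Real.rpow_mul toReal_nonneg]
    congr 1
    congr 1
    ring
  have hmain := holder_eq_aux hp hfm hgm hhm hf0 hg0 habs hA hB hfA hgB hint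
  set c := ((gagPow N s p v).toReal / (gagPow N s p u).toReal) ^ ((1:ℝ)/p) with hc_def
  have hc : 0 < c := Real.rpow_pos_of_pos (div_pos hB hA) _
  have hoff : ∀ᵐ z : (Fin N → ℝ) × (Fin N → ℝ), ¬ z.1 = z.2 :=
    measure_eq_zero_iff_ae_notMem.1 (diag_null N hNpos)
  have hVU : ∀ᵐ z : (Fin N → ℝ) × (Fin N → ℝ),
      v z.1 - v z.2 = c * (u z.1 - u z.2) := by
    filter_upwards [hmain, hoff] with z hz hne
    have hKpos : 0 < dist z.1 z.2 ^ ((N:ℝ) + s * p) :=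
      Real.rpow_pos_of_pos (dist_pos.2 hne) _
    exact recover hp hc _ _ _ hKpos hz.1 hz.2
  have hwdiag : ∀ᵐ z : (Fin N → ℝ) × (Fin N → ℝ),
      (fun x => v x - c * u x) z.1 = (fun x => v x - c * u x) z.2 := by
    filter_upwards [hVU] with z hz
    linarith [hz]
  have hwLp : MemLp (fun x => v x - c * u x) (ENNReal.ofReal p) volume := by
    have h1 : MemLp (fun x => c * u x) (ENNReal.ofReal p) volume :=
      hu.1.2.1.const_mul c
    exact hv.1.2.1.sub h1
  have hw0 := eq_zero_of_ae_eq_prod N hNpos hp0 hwLp hwdiag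
  refine ⟨c, 1, hc.le, zero_le_one, fun h' => one_ne_zero h'.2, ?_⟩
  filter_upwards [hw0] with x hx
  linarith [hx]
end

section
/- Let p ∈ (1,∞), s ∈ (0,1), N > sp, Ω bounded Lipschitz, λ ∈ ℝ, and let I be the energy functional I(u) = (1/p)‖u‖^p − (λ/p)‖u‖_p^p − (1/p*)‖u‖_{p*}^{p*} on X = {u ∈ W^{s,p}(ℝ^N): u = 0 a.e. outside Ω}. Every Palais–Smale sequence for I (i.e., (u_j) ⊂ X with I(u_j) bounded and I'(u_j) → 0 in X*) is bounded in X. -/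
open MeasureTheory Filter Topology ENNReal NNReal

noncomputable def hfun (q M r : ℝ) : ℝ := min r (M ^ (q-1) * r ^ (2-q))

noncomputable def psi (q M t : ℝ) : ℝ := if 0 ≤ t then hfun q M t else - hfun q M (-t)

section hfun

lemma rpow_split {r q : ℝ} (hr : 0 < r) : r = r ^ (q-1) * r ^ (2-q) := by
  rw [← Real.rpow_add hr]
  norm_num

lemma hfun_nonneg {q M r : ℝ} (hM : 0 < M) (hr : 0 ≤ r) : 0 ≤ hfun q M r :=
  le_min hr (mul_nonneg (Real.rpow_nonneg hM.le _) (Real.rpow_nonneg hr _))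

lemma hfun_le {q M r : ℝ} : hfun q M r ≤ r := min_le_left _ _

lemma hfun_eq_left {q M r : ℝ} (hq : 1 < q) (hM : 0 < M) (hr : 0 ≤ r) (hrM : r ≤ M) :
    hfun q M r = r := by
  rcases eq_or_lt_of_le hr with h | h
  · have : (0:ℝ) ≤ M ^ (q-1) * (0:ℝ) ^ (2-q) :=
      mul_nonneg (Real.rpow_nonneg hM.le _) (Real.rpow_nonneg le_rfl _)
    simp [hfun, ← h, this]
  · refine min_eq_left ?_
    calc r = r ^ (q-1) * r ^ (2-q) := rpow_split h
    _ ≤ M ^ (q-1) * r ^ (2-q) :=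
        mul_le_mul_of_nonneg_right (Real.rpow_le_rpow hr hrM (by linarith))
          (Real.rpow_nonneg h.le _)

lemma hfun_eq_right {q M r : ℝ} (hq : 1 < q) (hM : 0 < M) (hr : M ≤ r) :
    hfun q M r = M ^ (q-1) * r ^ (2-q) := by
  have hr0 : 0 < r := hM.trans_le hr
  refine min_eq_right ?_
  calc M ^ (q-1) * r ^ (2-q) ≤ r ^ (q-1) * r ^ (2-q) :=
        mul_le_mul_of_nonneg_right (Real.rpow_le_rpow hM.le hr (by linarith))
          (Real.rpow_nonneg hr0.le _)
  _ = r := (rpow_split hr0).symm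

lemma hfun_mul_upper {q M r : ℝ} (hq : 1 < q) (hM : 0 < M) (hr : 0 ≤ r) :
    r ^ (q-1) * hfun q M r ≤ M ^ (q-1) * r := by
  rcases le_total r M with h | h
  · rw [hfun_eq_left hq hM hr h]
    exact mul_le_mul_of_nonneg_right (Real.rpow_le_rpow hr h (by linarith)) hr
  · have hr0 : 0 < r := hM.trans_le h
    rw [hfun_eq_right hq hM h]
    refine le_of_eq ?_
    calc r ^ (q-1) * (M ^ (q-1) * r ^ (2-q)) = M ^ (q-1) * (r ^ (q-1) * r ^ (2-q)) := by ring
    _ = M ^ (q-1) * r := by rw [← rpow_split hr0]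

lemma hfun_mul_lower {q M r : ℝ} (hq : 1 < q) (hM : 0 < M) (hr : 0 ≤ r) :
    (min r M) ^ q ≤ r ^ (q-1) * hfun q M r := by
  rcases le_total r M with h | h
  · rw [min_eq_left h, hfun_eq_left hq hM hr h]
    rcases eq_or_lt_of_le hr with h0 | h0
    · rw [← h0, Real.zero_rpow (by positivity)]
      positivity
    · rw [show r ^ (q-1) * r = r ^ (q-1) * r ^ (1:ℝ) by rw [Real.rpow_one],
        ← Real.rpow_add h0]
      norm_num
  · rw [min_eq_right h, hfun_eq_right hq hM h]
    have hr0 : 0 < r := hM.trans_le h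
    calc M ^ q = M ^ (q-1) * M ^ (1:ℝ) := by rw [← Real.rpow_add hM]; norm_num
    _ = M ^ (q-1) * M := by rw [Real.rpow_one]
    _ ≤ M ^ (q-1) * r := mul_le_mul_of_nonneg_left h (Real.rpow_nonneg hM.le _)
    _ = M ^ (q-1) * (r ^ (q-1) * r ^ (2-q)) := by rw [← rpow_split hr0]
    _ = r ^ (q-1) * (M ^ (q-1) * r ^ (2-q)) := by ring

end hfun

lemma g_lip {q M : ℝ} (hq : 1 < q) (hM : 0 < M) {a b : ℝ} (haM : M ≤ a) (hab : a ≤ b) :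
    |M ^ (q-1) * b ^ (2-q) - M ^ (q-1) * a ^ (2-q)| ≤ |2-q| * (b - a) := by
  have ha0 : 0 < a := hM.trans_le haM
  set C : ℝ := |2-q| * M ^ (1-q) with hC
  have key : ∀ x ∈ Set.Icc a b, ‖(fun r : ℝ => r ^ (2-q)) x - (fun r : ℝ => r ^ (2-q)) a‖
      ≤ C * (x - a) := by
    refine norm_image_sub_le_of_norm_deriv_le_segment'
      (f' := fun x => (2-q) * x ^ (2-q-1)) (fun x hx => ?_) (fun x hx => ?_)
    · exact (Real.hasDerivAt_rpow_const
        (Or.inl (ne_of_gt (ha0.trans_le hx.1)))).hasDerivWithinAt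
    · have hx0 : 0 < x := ha0.trans_le hx.1
      rw [Real.norm_eq_abs, abs_mul, abs_of_nonneg (Real.rpow_nonneg hx0.le _)]
      have h2 : x ^ (2-q-1) ≤ M ^ (1-q) := by
        rw [show (2-q-1 : ℝ) = 1-q by ring]
        exact Real.rpow_le_rpow_of_nonpos hM (haM.trans hx.1) (by linarith)
      exact mul_le_mul_of_nonneg_left h2 (abs_nonneg _) |>.trans
        (le_of_eq rfl)
  have hb := key b ⟨hab, le_rfl⟩
  rw [Real.norm_eq_abs] at hb
  calc |M ^ (q-1) * b ^ (2-q) - M ^ (q-1) * a ^ (2-q)|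
      = M ^ (q-1) * |b ^ (2-q) - a ^ (2-q)| := by
        rw [← mul_sub, abs_mul, abs_of_nonneg (Real.rpow_nonneg hM.le _)]
  _ ≤ M ^ (q-1) * (C * (b - a)) :=
        mul_le_mul_of_nonneg_left hb (Real.rpow_nonneg hM.le _)
  _ = (M ^ (q-1) * M ^ (1-q)) * (|2-q| * (b-a)) := by rw [hC]; ring
  _ = |2-q| * (b - a) := by
        rw [← Real.rpow_add hM]
        norm_num

lemma abs_two_sub_le {q : ℝ} (hq : 1 < q) : |2 - q| ≤ q := by
  rcases le_total 2 q with h | h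
  · rw [abs_of_nonpos (by linarith)]; linarith
  · rw [abs_of_nonneg (by linarith)]; linarith

lemma hfun_lip {q M : ℝ} (hq : 1 < q) (hM : 0 < M) {a b : ℝ} (ha : 0 ≤ a) (hab : a ≤ b) :
    |hfun q M b - hfun q M a| ≤ q * (b - a) := by
  have hq0 : (0:ℝ) < q := by linarith
  rcases le_total b M with h | h
  · rw [hfun_eq_left hq hM (ha.trans hab) h, hfun_eq_left hq hM ha (hab.trans h),
      abs_of_nonneg (by linarith)]
    nlinarith
  · rcases le_total a M with h2 | h2
    · rw [hfun_eq_left hq hM ha h2, hfun_eq_right hq hM h]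
      have hgb_le : M ^ (q-1) * b ^ (2-q) ≤ b := by
        rw [← hfun_eq_right hq hM h]; exact hfun_le
      have hgM : M ^ (q-1) * M ^ (2-q) = M := by
        rw [← Real.rpow_add hM]; norm_num
      have hlow : a - M ^ (q-1) * b ^ (2-q) ≤ q * (b - a) := by
        have h3 : M - M ^ (q-1) * b ^ (2-q) ≤ |2-q| * (b - M) := by
          have := g_lip hq hM le_rfl h
          rw [hgM] at this
          calc M - M ^ (q-1) * b ^ (2-q) ≤ |M ^ (q-1) * b ^ (2-q) - M| := by
                rw [abs_sub_comm]; exact le_abs_self _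
          _ ≤ |2-q| * (b - M) := this
        have h4 : |2-q| * (b - M) ≤ q * (b - a) := by
          have := abs_two_sub_le hq
          have hbM : (0:ℝ) ≤ b - M := by linarith
          nlinarith [abs_nonneg (2-q)]
        linarith
      rw [abs_le]
      constructor
      · nlinarith
      · nlinarith
    · rw [hfun_eq_right hq hM h, hfun_eq_right hq hM h2]
      exact (g_lip hq hM h2 hab).trans
        (mul_le_mul_of_nonneg_right (abs_two_sub_le hq) (by linarith))

lemma psi_zero {q M : ℝ} (hM : 0 < M) : psi q M 0 = 0 := by
  have : hfun q M 0 = 0 :=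
    le_antisymm hfun_le (hfun_nonneg hM le_rfl)
  simp [psi, this]

lemma psi_abs_le {q M : ℝ} (hM : 0 < M) (t : ℝ) : |psi q M t| ≤ |t| := by
  unfold psi
  split_ifs with h
  · rw [abs_of_nonneg (hfun_nonneg hM h), abs_of_nonneg h]; exact hfun_le
  · push_neg at h
    rw [abs_neg, abs_of_nonneg (hfun_nonneg hM (by linarith)), abs_of_neg h]
    exact hfun_le

lemma mul_psi {q M : ℝ} (hM : 0 < M) (t : ℝ) : t * psi q M t = |t| * hfun q M |t| := by
  unfold psi
  split_ifs with h
  · rw [abs_of_nonneg h]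
  · push_neg at h
    rw [abs_of_neg h]; ring_nf
lemma psi_lip {q M : ℝ} (hq : 1 < q) (hM : 0 < M) (a b : ℝ) :
    |psi q M a - psi q M b| ≤ q * |a - b| := by
  have hq0 : (0:ℝ) < q := by linarith
  have key : ∀ x y : ℝ, 0 ≤ x → 0 ≤ y → |hfun q M x - hfun q M y| ≤ q * |x - y| := by
    intro x y hx hy
    rcases le_total y x with h | h
    · rw [abs_of_nonneg (by linarith : (0:ℝ) ≤ x - y)]
      exact hfun_lip hq hM hy h
    · rw [abs_sub_comm, abs_of_nonpos (by linarith : x - y ≤ 0)]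
      have := hfun_lip hq hM hx h
      simpa using this
  have hpos : ∀ x y : ℝ, 0 ≤ x → y < 0 → |psi q M x - psi q M y| ≤ q * |x - y| := by
    intro x y hx hy
    have : psi q M x - psi q M y = hfun q M x + hfun q M (-y) := by
      unfold psi
      rw [if_pos hx, if_neg (not_le.mpr hy)]
      ring
    have hnn : 0 ≤ hfun q M x + hfun q M (-y) :=
      add_nonneg (hfun_nonneg hM hx) (hfun_nonneg hM (by linarith))
    rw [this, abs_of_nonneg hnn, abs_of_nonneg (by linarith : (0:ℝ) ≤ x - y)]
    have h1 : hfun q M x ≤ x := hfun_le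
    have h2 : hfun q M (-y) ≤ -y := hfun_le
    nlinarith
  rcases le_or_gt 0 a with ha | ha <;> rcases le_or_gt 0 b with hb | hb
  · have : psi q M a - psi q M b = hfun q M a - hfun q M b := by
      unfold psi; rw [if_pos ha, if_pos hb]
    rw [this]; exact key a b ha hb
  · exact hpos a b ha hb
  · rw [abs_sub_comm, abs_sub_comm a b]; exact hpos b a hb ha
  · have : psi q M a - psi q M b = hfun q M (-b) - hfun q M (-a) := by
      unfold psi; rw [if_neg (not_le.mpr ha), if_neg (not_le.mpr hb)]; ring
    rw [this]
    have := key (-b) (-a) (by linarith) (by linarith)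
    calc |hfun q M (-b) - hfun q M (-a)| ≤ q * |(-b) - (-a)| := this
    _ = q * |a - b| := by rw [show -b - -a = a - b by ring]

lemma psi_measurable {q M : ℝ} : Measurable (psi q M) := by
  unfold psi hfun
  refine Measurable.ite (measurableSet_le measurable_const measurable_id) ?_ ?_
  · exact measurable_id.min ((measurable_id.pow measurable_const).const_mul _)
  · exact (measurable_id.neg.min
      ((measurable_id.neg.pow measurable_const).const_mul _)).neg

lemma a1 {q : ℝ} (hq : q ≠ 0) (t : ℝ) : |t| ^ (q-2) * t * t = |t| ^ q := by
  rcases eq_or_ne t 0 with h | h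
  · rw [h]
    simp [Real.zero_rpow hq]
  · have h0 : (0:ℝ) < |t| := abs_pos.mpr h
    calc |t| ^ (q-2) * t * t = |t| ^ (q-2) * (|t| * |t|) := by
          rw [abs_mul_abs_self]; ring
    _ = |t| ^ (q-2) * (|t| ^ (1:ℝ) * |t| ^ (1:ℝ)) := by rw [Real.rpow_one]
    _ = |t| ^ q := by rw [← Real.rpow_add h0, ← Real.rpow_add h0]; norm_num

lemma a1' {q : ℝ} (hq : q ≠ 0) {t : ℝ} (ht : 0 ≤ t) : t ^ (q-2) * t * t = t ^ q := by
  have := a1 hq t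
  rwa [abs_of_nonneg ht] at this

section gag
variable {N : ℕ} {s p : ℝ}

lemma gag_integrand_measurable {u : (Fin N → ℝ) → ℝ} (hu : Measurable u) :
    Measurable (fun z : (Fin N → ℝ) × (Fin N → ℝ) =>
      |u z.1 - u z.2| ^ p / dist z.1 z.2 ^ ((N : ℝ) + s * p)) := by
  exact (((hu.comp measurable_fst).sub (hu.comp measurable_snd)).abs.pow
    measurable_const).div (measurable_dist.pow measurable_const)

lemma A_integrand_measurable {u v : (Fin N → ℝ) → ℝ} (hu : Measurable u)
    (hv : Measurable v) :
    Measurable (fun z : (Fin N → ℝ) × (Fin N → ℝ) =>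
      |u z.1 - u z.2| ^ (p-2) * (u z.1 - u z.2) * (v z.1 - v z.2)
        / dist z.1 z.2 ^ ((N : ℝ) + s * p)) := by
  exact (((((hu.comp measurable_fst).sub (hu.comp measurable_snd)).abs.pow
    measurable_const).mul ((hu.comp measurable_fst).sub (hu.comp measurable_snd))).mul
    (((hv.comp measurable_fst).sub (hv.comp measurable_snd)))).div
    (measurable_dist.pow measurable_const)

lemma integral_dom_eq {u : (Fin N → ℝ) → ℝ} (hu : Measurable u) :
    (∫ z : (Fin N → ℝ) × (Fin N → ℝ),
      |u z.1 - u z.2| ^ p / dist z.1 z.2 ^ ((N : ℝ) + s * p)) = (gagPow N s p u).toReal := by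
  rw [integral_eq_lintegral_of_nonneg_ae]
  · rfl
  · exact Filter.Eventually.of_forall fun z => by positivity
  · exact (gag_integrand_measurable hu).aestronglyMeasurable

lemma dom_integrable {u : (Fin N → ℝ) → ℝ} (hu : Measurable u)
    (hfin : gagPow N s p u < ⊤) :
    Integrable (fun z : (Fin N → ℝ) × (Fin N → ℝ) =>
      |u z.1 - u z.2| ^ p / dist z.1 z.2 ^ ((N : ℝ) + s * p)) := by
  refine ⟨(gag_integrand_measurable hu).aestronglyMeasurable, ?_⟩
  rw [hasFiniteIntegral_iff_ofReal (Filter.Eventually.of_forall fun z => by positivity)]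
  exact hfin

lemma Aform_self {u : (Fin N → ℝ) → ℝ} (hu : Measurable u) (hp : 1 < p) :
    Aform N s p u u = (gagPow N s p u).toReal := by
  unfold Aform
  rw [← integral_dom_eq hu]
  congr 1
  funext z
  rw [a1 (by linarith : p ≠ 0)]

lemma Aform_bound {u v : (Fin N → ℝ) → ℝ} (hu : Measurable u) (hv : Measurable v)
    (hfin : gagPow N s p u < ⊤) (hp : 1 < p) {L : ℝ} (hL0 : 0 ≤ L)
    (hL : ∀ a b, |v a - v b| ≤ L * |u a - u b|) :
    |Aform N s p u v| ≤ L * (gagPow N s p u).toReal := by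
  have hdom := dom_integrable hu hfin
  have hptbound : ∀ z : (Fin N → ℝ) × (Fin N → ℝ),
      ‖|u z.1 - u z.2| ^ (p-2) * (u z.1 - u z.2) * (v z.1 - v z.2)
        / dist z.1 z.2 ^ ((N : ℝ) + s * p)‖
      ≤ L * (|u z.1 - u z.2| ^ p / dist z.1 z.2 ^ ((N : ℝ) + s * p)) := by
    intro z
    set a := u z.1 - u z.2
    set c := v z.1 - v z.2
    set d := dist z.1 z.2 ^ ((N : ℝ) + s * p) with hd
    have hd0 : 0 ≤ d := Real.rpow_nonneg dist_nonneg _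
    rw [Real.norm_eq_abs, abs_div, abs_of_nonneg hd0, abs_mul, abs_mul,
      abs_of_nonneg (Real.rpow_nonneg (abs_nonneg a) _)]
    have h1 : |a| ^ (p-2) * |a| * |c| ≤ L * |a| ^ p := by
      calc |a| ^ (p-2) * |a| * |c| ≤ |a| ^ (p-2) * |a| * (L * |a|) :=
            mul_le_mul_of_nonneg_left (hL _ _)
              (mul_nonneg (Real.rpow_nonneg (abs_nonneg a) _) (abs_nonneg a))
      _ = L * (|a| ^ (p-2) * |a| * |a|) := by ring
      _ = L * |a| ^ p := by rw [a1' (by linarith : p ≠ 0) (abs_nonneg a)]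
    rcases eq_or_lt_of_le hd0 with h0 | h0
    · simp [← h0]
    · rw [mul_div_assoc' L]
      exact (div_le_div_iff_of_pos_right h0).mpr h1
  calc |Aform N s p u v| ≤ ∫ z : (Fin N → ℝ) × (Fin N → ℝ),
        ‖|u z.1 - u z.2| ^ (p-2) * (u z.1 - u z.2) * (v z.1 - v z.2)
          / dist z.1 z.2 ^ ((N : ℝ) + s * p)‖ := by
        rw [← Real.norm_eq_abs]
        exact norm_integral_le_integral_norm _
  _ ≤ ∫ z : (Fin N → ℝ) × (Fin N → ℝ),
        L * (|u z.1 - u z.2| ^ p / dist z.1 z.2 ^ ((N : ℝ) + s * p)) := by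
        refine integral_mono_of_nonneg (Filter.Eventually.of_forall fun z => norm_nonneg _)
          (hdom.const_mul L) (Filter.Eventually.of_forall hptbound)
  _ = L * (gagPow N s p u).toReal := by
        rw [integral_const_mul, integral_dom_eq hu]

end gag

lemma div_mono_num {x y d : ℝ} (hd : 0 ≤ d) (h : x ≤ y) : x / d ≤ y / d := by
  rcases eq_or_lt_of_le hd with h0 | h0
  · simp [← h0]
  · exact (div_le_div_iff_of_pos_right h0).mpr h

lemma gagPow_comp_le {u v : (Fin N → ℝ) → ℝ} (hp : 1 < p) {L : ℝ} (hL0 : 0 ≤ L)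
    (hL : ∀ a b, |v a - v b| ≤ L * |u a - u b|) :
    gagPow N s p v ≤ ENNReal.ofReal (L ^ p) * gagPow N s p u := by
  unfold gagPow
  rw [← lintegral_const_mul' _ _ ofReal_ne_top]
  refine lintegral_mono fun z => ?_
  rw [← ENNReal.ofReal_mul (Real.rpow_nonneg hL0 _)]
  refine ENNReal.ofReal_le_ofReal ?_
  rw [mul_div_assoc']
  refine div_mono_num (Real.rpow_nonneg dist_nonneg _) ?_
  calc |v z.1 - v z.2| ^ p ≤ (L * |u z.1 - u z.2|) ^ p :=
        Real.rpow_le_rpow (abs_nonneg _) (hL _ _) (by linarith)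
  _ = L ^ p * |u z.1 - u z.2| ^ p := Real.mul_rpow hL0 (abs_nonneg _)

lemma gagNorm_nonneg {u : (Fin N → ℝ) → ℝ} : 0 ≤ gagNorm N s p u :=
  Real.rpow_nonneg ENNReal.toReal_nonneg _

lemma gagNorm_rpow {u : (Fin N → ℝ) → ℝ} (hp0 : p ≠ 0) :
    gagNorm N s p u ^ p = (gagPow N s p u).toReal := by
  rw [gagNorm, ← Real.rpow_mul ENNReal.toReal_nonneg, one_div_mul_cancel hp0, Real.rpow_one]

lemma gagNorm_comp_le {u v : (Fin N → ℝ) → ℝ} (hp : 1 < p)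
    (hfin : gagPow N s p u < ⊤) {L : ℝ} (hL0 : 0 ≤ L)
    (hL : ∀ a b, |v a - v b| ≤ L * |u a - u b|) :
    gagNorm N s p v ≤ L * gagNorm N s p u := by
  have h := gagPow_comp_le (s := s) hp hL0 hL
  have hfin2 : ENNReal.ofReal (L ^ p) * gagPow N s p u ≠ ⊤ :=
    ENNReal.mul_ne_top ofReal_ne_top hfin.ne
  calc gagNorm N s p v = (gagPow N s p v).toReal ^ (1/p) := rfl
  _ ≤ ((ENNReal.ofReal (L ^ p) * gagPow N s p u).toReal) ^ (1/p) :=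
      Real.rpow_le_rpow ENNReal.toReal_nonneg (ENNReal.toReal_mono hfin2 h) (by positivity)
  _ = (L ^ p * (gagPow N s p u).toReal) ^ (1/p) := by
      rw [ENNReal.toReal_mul, ENNReal.toReal_ofReal (Real.rpow_nonneg hL0 _)]
  _ = (L ^ p) ^ (1/p) * (gagPow N s p u).toReal ^ (1/p) :=
      Real.mul_rpow (Real.rpow_nonneg hL0 _) ENNReal.toReal_nonneg
  _ = L * gagNorm N s p u := by
      rw [← Real.rpow_mul hL0, mul_one_div_cancel (by linarith : p ≠ 0), Real.rpow_one]
      rfl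
section part5
variable {N : ℕ} {s p : ℝ}

lemma ofReal_abs_rpow {q : ℝ} (hq : 0 ≤ q) (x : ℝ) :
    ENNReal.ofReal (|x| ^ q) = (‖x‖₊ : ℝ≥0∞) ^ q := by
  rw [← enorm_eq_nnnorm, Real.enorm_eq_ofReal_abs, ENNReal.ofReal_rpow_of_nonneg (abs_nonneg _) hq]

lemma Pbar_lt_top {u : (Fin N → ℝ) → ℝ} (hp : 1 < p)
    (hmem : MemLp u (ENNReal.ofReal p) volume) :
    ∫⁻ x, ENNReal.ofReal (|u x| ^ p) < ⊤ := by
  have h0 : (ENNReal.ofReal p) ≠ 0 := by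
    simp only [ne_eq, ENNReal.ofReal_eq_zero, not_le]; linarith
  have h := (eLpNorm_lt_top_iff_lintegral_rpow_enorm_lt_top h0 ofReal_ne_top).mp hmem.2
  simp only [enorm_eq_nnnorm] at h
  rw [ENNReal.toReal_ofReal (by linarith : (0:ℝ) ≤ p)] at h
  simpa only [ofReal_abs_rpow (by linarith : (0:ℝ) ≤ p)] using h

lemma setint_eq {f : (Fin N → ℝ) → ℝ} (hf : Measurable f) (hf0 : ∀ x, 0 ≤ f x)
    (Ω : Set (Fin N → ℝ)) :
    ∫ x in Ω, f x = (∫⁻ x in Ω, ENNReal.ofReal (f x)).toReal := by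
  rw [integral_eq_lintegral_of_nonneg_ae (Filter.Eventually.of_forall hf0)
    hf.aestronglyMeasurable]

lemma setint_integrable {f : (Fin N → ℝ) → ℝ} (hf : Measurable f) (hf0 : ∀ x, 0 ≤ f x)
    {Ω : Set (Fin N → ℝ)} (hfin : (∫⁻ x in Ω, ENNReal.ofReal (f x)) < ⊤) :
    IntegrableOn f Ω volume := by
  refine ⟨hf.aestronglyMeasurable, ?_⟩
  rwa [hasFiniteIntegral_iff_ofReal (Filter.Eventually.of_forall hf0)]

lemma a2 {q M : ℝ} (hq : 1 < q) (hM : 0 < M) (t : ℝ) :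
    |t| ^ (q-2) * t * psi q M t = |t| ^ (q-1) * hfun q M |t| := by
  rcases eq_or_ne t 0 with h | h
  · rw [h]
    have : psi q M 0 = 0 := psi_zero hM
    rw [this]
    simp [Real.zero_rpow (by linarith : q - 1 ≠ 0)]
  · have h0 : (0:ℝ) < |t| := abs_pos.mpr h
    calc |t| ^ (q-2) * t * psi q M t = |t| ^ (q-2) * (t * psi q M t) := by ring
    _ = |t| ^ (q-2) * (|t| * hfun q M |t|) := by rw [mul_psi hM]
    _ = (|t| ^ (q-2) * |t| ^ (1:ℝ)) * hfun q M |t| := by rw [Real.rpow_one]; ring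
    _ = |t| ^ (q-1) * hfun q M |t| := by
        rw [← Real.rpow_add h0, show q-2+1 = q-1 by ring]

lemma Tbar_bound {u : (Fin N → ℝ) → ℝ} {Ω : Set (Fin N → ℝ)} {q B : ℝ}
    (hu : Measurable u) (hq : 1 < q)
    (hint : IntegrableOn (fun x => |u x|) Ω volume)
    (hB : ∀ M : ℝ, 0 < M → (∫ x in Ω, |u x| ^ (q-2) * u x * psi q M (u x)) ≤ B) :
    (∫⁻ x in Ω, ENNReal.ofReal (|u x| ^ q)) ≤ ENNReal.ofReal B := by
  have key : ∀ n : ℕ,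
      (∫⁻ x in Ω, ENNReal.ofReal (min |u x| ((n:ℝ)+1) ^ q)) ≤ ENNReal.ofReal B := by
    intro n
    set M : ℝ := (n:ℝ)+1 with hMdef
    have hM : 0 < M := by positivity
    have hFmeas : Measurable (fun x => |u x| ^ (q-2) * u x * psi q M (u x)) :=
      ((hu.abs.pow measurable_const).mul hu).mul (psi_measurable.comp hu)
    have hF0 : ∀ x, 0 ≤ |u x| ^ (q-2) * u x * psi q M (u x) := by
      intro x
      rw [a2 hq hM]
      exact mul_nonneg (Real.rpow_nonneg (abs_nonneg _) _) (hfun_nonneg hM (abs_nonneg _))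
    have hFle : ∀ x, |u x| ^ (q-2) * u x * psi q M (u x) ≤ M ^ (q-1) * |u x| := by
      intro x
      rw [a2 hq hM]
      exact hfun_mul_upper hq hM (abs_nonneg _)
    have hFint : IntegrableOn (fun x => |u x| ^ (q-2) * u x * psi q M (u x)) Ω volume := by
      refine Integrable.mono' (hint.const_mul (M ^ (q-1))) hFmeas.aestronglyMeasurable ?_
      refine Filter.Eventually.of_forall fun x => ?_
      rw [Real.norm_eq_abs, abs_of_nonneg (hF0 x)]
      exact hFle x
    have heq : ENNReal.ofReal (∫ x in Ω, |u x| ^ (q-2) * u x * psi q M (u x))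
        = ∫⁻ x in Ω, ENNReal.ofReal (|u x| ^ (q-2) * u x * psi q M (u x)) :=
      ofReal_integral_eq_lintegral_ofReal hFint (Filter.Eventually.of_forall hF0)
    calc (∫⁻ x in Ω, ENNReal.ofReal (min |u x| M ^ q))
        ≤ ∫⁻ x in Ω, ENNReal.ofReal (|u x| ^ (q-2) * u x * psi q M (u x)) := by
          refine lintegral_mono fun x => ENNReal.ofReal_le_ofReal ?_
          rw [a2 hq hM]
          exact hfun_mul_lower hq hM (abs_nonneg _)
    _ = ENNReal.ofReal (∫ x in Ω, |u x| ^ (q-2) * u x * psi q M (u x)) := heq.symm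
    _ ≤ ENNReal.ofReal B := ENNReal.ofReal_le_ofReal (hB M hM)
  have hmono : Monotone (fun n : ℕ => fun x =>
      ENNReal.ofReal (min |u x| ((n:ℝ)+1) ^ q)) := by
    intro n m hnm
    intro x
    refine ENNReal.ofReal_le_ofReal (Real.rpow_le_rpow (le_min (abs_nonneg _) (by positivity))
      (min_le_min le_rfl (by exact_mod_cast add_le_add_left (Nat.cast_le.mpr hnm) 1))
      (by linarith))
  have hsup : ∀ x, (⨆ n : ℕ, ENNReal.ofReal (min |u x| ((n:ℝ)+1) ^ q))
      = ENNReal.ofReal (|u x| ^ q) := by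
    intro x
    apply le_antisymm
    · refine iSup_le fun n => ENNReal.ofReal_le_ofReal
        (Real.rpow_le_rpow (le_min (abs_nonneg _) (by positivity)) (min_le_left _ _)
          (by linarith))
    · obtain ⟨n, hn⟩ := exists_nat_ge |u x|
      have : min |u x| ((n:ℝ)+1) = |u x| := min_eq_left (by linarith)
      refine le_trans (le_of_eq ?_) (le_iSup _ n)
      rw [this]
  calc (∫⁻ x in Ω, ENNReal.ofReal (|u x| ^ q))
      = ∫⁻ x in Ω, ⨆ n : ℕ, ENNReal.ofReal (min |u x| ((n:ℝ)+1) ^ q) := by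
        refine lintegral_congr fun x => (hsup x).symm
  _ = ⨆ n : ℕ, ∫⁻ x in Ω, ENNReal.ofReal (min |u x| ((n:ℝ)+1) ^ q) := by
        refine (lintegral_iSup (fun n => ?_) hmono)
        exact ENNReal.measurable_ofReal.comp ((hu.abs.min measurable_const).pow
          measurable_const)
  _ ≤ ENNReal.ofReal B := iSup_le key

end part5

lemma rpow_le_one_add_rpow {t a b : ℝ} (ht : 0 ≤ t) (ha : 0 ≤ a) (hab : a ≤ b) :
    t ^ a ≤ 1 + t ^ b := by
  rcases le_total t 1 with h | h
  · have h1 : t ^ a ≤ 1 := Real.rpow_le_one ht h ha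
    have h2 : 0 ≤ t ^ b := Real.rpow_nonneg ht _
    linarith
  · have h1 : t ^ a ≤ t ^ b := Real.rpow_le_rpow_of_exponent_le h hab
    have h2 : 0 ≤ t ^ b := Real.rpow_nonneg ht _
    linarith


/-- Every Palais–Smale sequence for the energy functional
`I(u) = (1/p)‖u‖^p − (λ/p)‖u‖_p^p − (1/p*)‖u‖_{p*}^{p*}` on `X` is bounded in `X`. -/
theorem palais_smale_bounded (N : ℕ) (s p lam : ℝ) (hp : 1 < p) (hs : 0 < s) (hs1 : s < 1)
    (hN : s * p < (N : ℝ)) (Ω : Set (Fin N → ℝ)) (hΩo : IsOpen Ω)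
    (hΩb : Bornology.IsBounded Ω)
    (u : ℕ → (Fin N → ℝ) → ℝ) (hu : ∀ j, inX N s p Ω (u j))
    (hIbd : ∃ C : ℝ, ∀ j, |(1 / p) * gagNorm N s p (u j) ^ p - (lam / p) * lnorm N p Ω (u j) ^ p
        - (1 / (N * p / (N - s * p))) * lnorm N (N * p / (N - s * p)) Ω (u j) ^ (N * p / (N - s * p))| ≤ C)
    (hI' : ∃ ε : ℕ → ℝ, Tendsto ε atTop (𝓝 0) ∧
      ∀ j (v : (Fin N → ℝ) → ℝ), inX N s p Ω v →
        |Aform N s p (u j) v - lam * (∫ x in Ω, |u j x| ^ (p - 2) * u j x * v x)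
            - ∫ x in Ω, |u j x| ^ (N * p / (N - s * p) - 2) * u j x * v x|
          ≤ ε j * gagNorm N s p v) :
    ∃ C : ℝ, ∀ j, gagNorm N s p (u j) ≤ C := by
  obtain ⟨C, hC⟩ := hIbd
  obtain ⟨ε, hε, hPS⟩ := hI'
  set q : ℝ := N * p / (N - s * p) with hqdef
  have hp0 : (0:ℝ) < p := lt_trans zero_lt_one hp
  have hsp : 0 < s * p := mul_pos hs hp0
  have hN0 : (0:ℝ) < N := lt_trans hsp hN
  have hNsp : (0:ℝ) < (N:ℝ) - s * p := by linarith
  have hq_pos : 0 < q := div_pos (mul_pos hN0 hp0) hNsp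
  have hpq : p < q := by
    rw [hqdef, lt_div_iff₀ hNsp]
    nlinarith
  have hq1 : 1 < q := lt_trans hp hpq
  have hfrac : p / q = ((N:ℝ) - s * p) / N := by
    rw [hqdef]
    field_simp
  -- bound for ε
  have htabs : Tendsto (fun j => |ε j|) atTop (𝓝 0) := by
    have := hε.abs
    rwa [abs_zero] at this
  obtain ⟨E0, hE0⟩ := htabs.bddAbove_range
  have hE0' : ∀ j, |ε j| ≤ E0 := fun j => hE0 ⟨j, rfl⟩
  set E : ℝ := max E0 0 with hEdef
  have hE : ∀ j, |ε j| ≤ E := fun j => le_trans (hE0' j) (le_max_left _ _)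
  have hE0nn : 0 ≤ E := le_max_right _ _
  have hC0 : 0 ≤ C := le_trans (abs_nonneg _) (hC 0)
  have hΩfin : volume Ω < ⊤ := hΩb.measure_lt_top
  set m : ℝ := (volume Ω).toReal with hmdef
  have hm0 : 0 ≤ m := ENNReal.toReal_nonneg
  have hσpos : 0 < s * p / N := div_pos hsp hN0
  set c₁ : ℝ := |lam| * m + (1 + |lam|) * (p * C) / (s * p / N) with hc1def
  set c₂ : ℝ := (1 + |lam|) * E / (s * p / N) + E with hc2def
  have hc10 : 0 ≤ c₁ := by positivity
  have hc20 : 0 ≤ c₂ := by positivity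
  refine ⟨max 1 ((c₁ + c₂) ^ (1 / (p - 1))), fun j => ?_⟩
  obtain ⟨⟨hum, humem, hufin⟩, husupp⟩ := hu j
  set g : ℝ := gagNorm N s p (u j) with hgdef
  have hg0 : 0 ≤ g := gagNorm_nonneg
  set G : ℝ := (gagPow N s p (u j)).toReal with hGdef
  have hG0 : 0 ≤ G := ENNReal.toReal_nonneg
  have hgG : g ^ p = G := gagNorm_rpow (ne_of_gt hp0)
  -- P
  have hPbar := Pbar_lt_top hp humem
  have hPbarΩ : (∫⁻ x in Ω, ENNReal.ofReal (|u j x| ^ p)) < ⊤ :=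
    lt_of_le_of_lt (setLIntegral_le_lintegral _ _) hPbar
  have hpnn : ∀ x, 0 ≤ |u j x| ^ p := fun x => Real.rpow_nonneg (abs_nonneg _) _
  have hPint : IntegrableOn (fun x => |u j x| ^ p) Ω volume :=
    setint_integrable (hum.abs.pow measurable_const) hpnn hPbarΩ
  set P : ℝ := ∫ x in Ω, |u j x| ^ p with hPdef
  have hP0 : 0 ≤ P := integral_nonneg hpnn
  -- |u| integrable on Ω
  have hconst_int : IntegrableOn (fun _ => (1:ℝ)) Ω volume :=
    (integrableOn_const_iff (C := (1:ℝ))).mpr (Or.inr hΩfin)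
  have habs_int : IntegrableOn (fun x => |u j x|) Ω volume := by
    refine Integrable.mono' (hconst_int.add hPint) hum.abs.aestronglyMeasurable ?_
    refine Filter.Eventually.of_forall fun x => ?_
    simp only [Real.norm_eq_abs, abs_abs]
    have := rpow_le_one_add_rpow (abs_nonneg (u j x)) (zero_le_one) hp.le
    rwa [Real.rpow_one] at this
  -- uniform bound from the PS condition with test functions psi
  set B : ℝ := q * G + |lam| * P + E * (q * g) with hBdef
  have hmainB : ∀ M : ℝ, 0 < M →
      (∫ x in Ω, |u j x| ^ (q - 2) * u j x * psi q M (u j x)) ≤ B := by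
    intro M hM
    set v : (Fin N → ℝ) → ℝ := fun x => psi q M (u j x) with hvdef
    have hvlip : ∀ a b, |v a - v b| ≤ q * |u j a - u j b| :=
      fun a b => psi_lip hq1 hM _ _
    have hvmeas : Measurable v := psi_measurable.comp hum
    have hvabs : ∀ x, |v x| ≤ |u j x| := fun x => psi_abs_le hM _
    have hvX : inX N s p Ω v := by
      refine ⟨⟨hvmeas, ?_, ?_⟩, ?_⟩
      · refine MemLp.of_le humem hvmeas.aestronglyMeasurable ?_
        exact Filter.Eventually.of_forall fun x => by
          rw [Real.norm_eq_abs, Real.norm_eq_abs]; exact hvabs x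
      · refine lt_of_le_of_lt (gagPow_comp_le hp (le_of_lt hq_pos) hvlip) ?_
        exact ENNReal.mul_lt_top ENNReal.ofReal_lt_top hufin
      · refine husupp.mono fun x hx hxΩ => ?_
        rw [hvdef]
        simp only []
        rw [hx hxΩ]
        exact psi_zero hM
    have hPS' := hPS j v hvX
    have hA : |Aform N s p (u j) v| ≤ q * G :=
      Aform_bound hum hvmeas hufin hp (le_of_lt hq_pos) hvlip
    have hI1 : |∫ x in Ω, |u j x| ^ (p - 2) * u j x * v x| ≤ P := by
      have hbd : ∀ x, ‖|u j x| ^ (p - 2) * u j x * v x‖ ≤ |u j x| ^ p := by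
        intro x
        rw [Real.norm_eq_abs, abs_mul, abs_mul,
          abs_of_nonneg (Real.rpow_nonneg (abs_nonneg _) _)]
        calc |u j x| ^ (p-2) * |u j x| * |v x| ≤ |u j x| ^ (p-2) * |u j x| * |u j x| :=
              mul_le_mul_of_nonneg_left (hvabs x)
                (mul_nonneg (Real.rpow_nonneg (abs_nonneg _) _) (abs_nonneg _))
        _ = |u j x| ^ p := a1' (by linarith : p ≠ 0) (abs_nonneg _)
      calc |∫ x in Ω, |u j x| ^ (p - 2) * u j x * v x|
          ≤ ∫ x in Ω, ‖|u j x| ^ (p - 2) * u j x * v x‖ := by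
            rw [← Real.norm_eq_abs]
            exact norm_integral_le_integral_norm _
      _ ≤ ∫ x in Ω, |u j x| ^ p := by
            refine integral_mono_of_nonneg (Filter.Eventually.of_forall fun x => norm_nonneg _)
              hPint (Filter.Eventually.of_forall hbd)
      _ = P := rfl
    have hgagv : gagNorm N s p v ≤ q * g :=
      gagNorm_comp_le hp hufin (le_of_lt hq_pos) hvlip
    have hgagv0 : 0 ≤ gagNorm N s p v := gagNorm_nonneg
    have hepsv : ε j * gagNorm N s p v ≤ E * (q * g) := by
      calc ε j * gagNorm N s p v ≤ |ε j| * gagNorm N s p v :=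
            mul_le_mul_of_nonneg_right (le_abs_self _) hgagv0
      _ ≤ E * (q * g) := mul_le_mul (hE j) hgagv hgagv0 hE0nn
    have habs1 := abs_le.mp hPS'
    have habs2 := abs_le.mp hA
    have habs3 := abs_le.mp hI1
    have hlami : lam * (∫ x in Ω, |u j x| ^ (p - 2) * u j x * v x) ≥ -( |lam| * P) := by
      have := neg_abs_le (lam * (∫ x in Ω, |u j x| ^ (p - 2) * u j x * v x))
      have h2 : |lam * (∫ x in Ω, |u j x| ^ (p - 2) * u j x * v x)| ≤ |lam| * P := by
        rw [abs_mul]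
        exact mul_le_mul_of_nonneg_left hI1 (abs_nonneg _)
      linarith
    rw [hBdef]
    linarith [habs1.1, habs1.2, habs2.1, habs2.2, hepsv]
  -- T
  have hTbar := Tbar_bound hum hq1 habs_int hmainB
  have hTfin : (∫⁻ x in Ω, ENNReal.ofReal (|u j x| ^ q)) < ⊤ :=
    lt_of_le_of_lt hTbar ENNReal.ofReal_lt_top
  have hqnn : ∀ x, 0 ≤ |u j x| ^ q := fun x => Real.rpow_nonneg (abs_nonneg _) _
  have hTint : IntegrableOn (fun x => |u j x| ^ q) Ω volume :=
    setint_integrable (hum.abs.pow measurable_const) hqnn hTfin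
  set T : ℝ := ∫ x in Ω, |u j x| ^ q with hTdef
  have hT0 : 0 ≤ T := integral_nonneg hqnn
  -- lnorm identities
  have hlnp : lnorm N p Ω (u j) ^ p = P := by
    rw [lnorm, ← Real.rpow_mul (integral_nonneg hpnn), one_div_mul_cancel (ne_of_gt hp0),
      Real.rpow_one]
  have hlnq : lnorm N q Ω (u j) ^ q = T := by
    rw [lnorm, ← Real.rpow_mul (integral_nonneg hqnn), one_div_mul_cancel (ne_of_gt hq_pos),
      Real.rpow_one]
  -- PS condition with v = u j
  have hPSu := hPS j (u j) ⟨⟨hum, humem, hufin⟩, husupp⟩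
  rw [Aform_self hum hp] at hPSu
  simp only [a1 (show p ≠ 0 by linarith), a1 (show q ≠ 0 by linarith)] at hPSu
  -- now hPSu : |G - lam * P - T| ≤ ε j * g
  have h2 : |G - lam * P - T| ≤ E * g := by
    refine le_trans hPSu ?_
    calc ε j * g ≤ |ε j| * g := mul_le_mul_of_nonneg_right (le_abs_self _) hg0
    _ ≤ E * g := mul_le_mul_of_nonneg_right (hE j) hg0
  -- energy bound
  have hCj := hC j
  rw [hgG, hlnp, hlnq] at hCj
  have hpx : p * ((1/p) * G - (lam/p) * P - (1/q) * T) = G - lam * P - (p/q) * T := by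
    field_simp
  have h1 : |G - lam * P - (p/q) * T| ≤ p * C := by
    rw [← hpx, abs_mul, abs_of_pos hp0]
    exact mul_le_mul_of_nonneg_left hCj hp0.le
  -- extract T bound
  have hσeq : (s * p / N) * T = (G - lam * P - (p/q) * T) - (G - lam * P - T) := by
    rw [hfrac]
    field_simp
    ring
  have hσT : (s * p / N) * T ≤ p * C + E * g := by
    have ha := abs_le.mp h1
    have hb := abs_le.mp h2
    linarith [hσeq]
  have hTle : T ≤ (p * C + E * g) / (s * p / N) := by
    rw [le_div_iff₀ hσpos, mul_comm]
    exact hσT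
  -- P ≤ m + T
  have hPle : P ≤ m + T := by
    have hpt : ∀ x, |u j x| ^ p ≤ 1 + |u j x| ^ q :=
      fun x => rpow_le_one_add_rpow (abs_nonneg _) hp0.le hpq.le
    calc P ≤ ∫ x in Ω, (1 + |u j x| ^ q) := integral_mono hPint (hconst_int.add hTint) hpt
    _ = m + T := by
        rw [integral_add hconst_int hTint, integral_const, measureReal_restrict_apply_univ, measureReal_def,
          smul_eq_mul, mul_one]
  -- assemble
  have hG1 : G ≤ lam * P + T + E * g := by
    have hb := abs_le.mp h2
    linarith
  have hlamP : lam * P ≤ |lam| * P := mul_le_mul_of_nonneg_right (le_abs_self lam) hP0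
  have hexp : (1 + |lam|) * ((p * C + E * g) / (s * p / N))
      = (1 + |lam|) * (p * C) / (s * p / N) + ((1 + |lam|) * E / (s * p / N)) * g := by
    field_simp
  have hTmul : (1 + |lam|) * T ≤ (1 + |lam|) * ((p * C + E * g) / (s * p / N)) :=
    mul_le_mul_of_nonneg_left hTle (by positivity)
  have hfinal : G ≤ c₁ + c₂ * g := by
    have h3a : |lam| * P ≤ |lam| * (m + T) := mul_le_mul_of_nonneg_left hPle (abs_nonneg lam)
    have h3 : G ≤ |lam| * m + (1 + |lam|) * T + E * g := by linarith [hG1, hlamP, h3a]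
    rw [hc1def, hc2def]
    linarith [hTmul, hexp]
  -- conclude
  by_contra hcon
  push_neg at hcon
  have hg1 : (1:ℝ) < g := lt_of_le_of_lt (le_max_left 1 _) hcon
  have hgpos : (0:ℝ) < g := lt_trans zero_lt_one hg1
  have hc1g : c₁ ≤ c₁ * g := le_mul_of_one_le_right hc10 hg1.le
  have hgp : g ^ p ≤ (c₁ + c₂) * g := by
    rw [hgG]
    have hring : (c₁ + c₂) * g = c₁ * g + c₂ * g := by ring
    linarith [hfinal, hc1g]
  have hsplit : g ^ p = g ^ (p-1) * g := by
    have := Real.rpow_add hgpos (p-1) 1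
    rw [show p - 1 + 1 = p by ring, Real.rpow_one] at this
    exact this
  have hgp1 : g ^ (p-1) ≤ c₁ + c₂ := by
    rw [hsplit] at hgp
    exact le_of_mul_le_mul_right hgp hgpos
  have hgle : g ≤ (c₁ + c₂) ^ (1 / (p-1)) := by
    have h := Real.rpow_le_rpow (Real.rpow_nonneg hg0 _) hgp1
      (one_div_nonneg.mpr (by linarith) : (0:ℝ) ≤ 1 / (p-1))
    rwa [← Real.rpow_mul hg0, mul_one_div_cancel (by linarith : p - 1 ≠ 0),
      Real.rpow_one] at h
  have : g ≤ max 1 ((c₁ + c₂) ^ (1 / (p-1))) := le_trans hgle (le_max_right _ _)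
  linarith
end

section
/- Let p ∈ (1,∞), s ∈ (0,1), N > sp, Ω bounded Lipschitz, and let λ_k ≤ λ < λ_{k+1} where λ_j are the cohomological-index variational eigenvalues of the fractional p-Laplacian on Ω. If in addition λ > λ_{k+1} − S/|Ω|^{sp/N}, where S is the best fractional Sobolev constant and |Ω| the Lebesgue measure of Ω, then any critical point u of the functional I(u) = (1/p)‖u‖^p − (λ/p)‖u‖_p^p − (1/p*)‖u‖_{p*}^{p*} produced at a minimax level c ≤ (s/N)|Ω|(λ_{k+1} − λ)^{N/(sp)} satisfies ‖u‖_{L^{p*}}^{p*} = (N/s)·c ≤ |Ω|(λ_{k+1} − λ)^{N/(sp)}; in particular such solutions tend to 0 in X as λ ↗ λ_{k+1}. -/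
open MeasureTheory Filter Topology ENNReal NNReal

lemma aux_abs_rpow (q : ℝ) (hq : q ≠ 0) (a : ℝ) : |a| ^ (q - 2) * a * a = |a| ^ q := by
  rcases eq_or_ne a 0 with h | h
  · simp [h, Real.zero_rpow hq]
  · have ha : (0:ℝ) < |a| := abs_pos.mpr h
    have h2 : a * a = |a| ^ (2:ℝ) := by rw [Real.rpow_two, sq_abs, sq]
    rw [mul_assoc, h2, ← Real.rpow_add ha]
    ring_nf

/-- Under `λ_k ≤ λ < λ_{k+1}` and `λ > λ_{k+1} − S/|Ω|^{sp/N}` (with `λ_j` the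
cohomological-index variational eigenvalues and `S` the best Sobolev constant), any
critical point `u` of `I_λ` at a level `c ≤ (s/N)|Ω|(λ_{k+1} − λ)^{N/(sp)}` satisfies
`‖u‖_{L^{p*}}^{p*} = (N/s)c ≤ |Ω|(λ_{k+1} − λ)^{N/(sp)}`. -/
theorem critical_point_smallness (N : ℕ) (s p lam₀ : ℝ) (hp : 1 < p) (hs : 0 < s)
    (hs1 : s < 1) (hN : s * p < (N : ℝ)) (Ω : Set (Fin N → ℝ)) (hΩo : IsOpen Ω)
    (hΩb : Bornology.IsBounded Ω) (hΩne : Ω.Nonempty)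
    (i : Set ((Fin N → ℝ) → ℝ) → ℕ∞)
    (lam : ℕ → ℝ)
    (hlam : ∀ l : ℕ, lam l = sInf {c : ℝ | ∃ M : Set ((Fin N → ℝ) → ℝ),
        (∀ u ∈ M, inX N s p Ω u ∧ gagNorm N s p u = 1) ∧
        (∀ u ∈ M, (fun x => -(u x)) ∈ M) ∧ (l : ℕ∞) ≤ i M ∧
        c = sSup ((fun u : (Fin N → ℝ) → ℝ => 1 / lnorm N p Ω u ^ p) '' M)})
    (S : ℝ)
    (hS : S = sInf {r : ℝ | ∃ u : (Fin N → ℝ) → ℝ, inX N s p Ω u ∧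
        ¬ u =ᵐ[volume] (fun _ => (0 : ℝ)) ∧
        r = gagNorm N s p u ^ p / lnorm N (N * p / (N - s * p)) Ω u ^ p})
    (k : ℕ) (hk1 : 1 ≤ k)
    (hlow : lam k ≤ lam₀) (hhigh : lam₀ < lam (k + 1))
    (hrange : lam (k + 1) - S / (volume Ω).toReal ^ (s * p / N) < lam₀)
    (u : (Fin N → ℝ) → ℝ) (hu : inX N s p Ω u)
    (hcrit : ∀ v : (Fin N → ℝ) → ℝ, inX N s p Ω v →
      Aform N s p u v = lam₀ * (∫ x in Ω, |u x| ^ (p - 2) * u x * v x)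
        + ∫ x in Ω, |u x| ^ (N * p / (N - s * p) - 2) * u x * v x)
    (c : ℝ)
    (hc : c = (1 / p) * gagNorm N s p u ^ p - (lam₀ / p) * lnorm N p Ω u ^ p
        - (1 / (N * p / (N - s * p))) * lnorm N (N * p / (N - s * p)) Ω u ^ (N * p / (N - s * p)))
    (hcle : c ≤ s / N * (volume Ω).toReal * (lam (k + 1) - lam₀) ^ ((N : ℝ) / (s * p))) :
    lnorm N (N * p / (N - s * p)) Ω u ^ (N * p / (N - s * p)) = N / s * c ∧
    lnorm N (N * p / (N - s * p)) Ω u ^ (N * p / (N - s * p))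
      ≤ (volume Ω).toReal * (lam (k + 1) - lam₀) ^ ((N : ℝ) / (s * p)) := by
  have hp0 : (0:ℝ) < p := lt_trans one_pos hp
  have hsp : (0:ℝ) < s * p := mul_pos hs (lt_trans one_pos hp)
  have hN0 : (0:ℝ) < (N:ℝ) := lt_trans hsp hN
  have hNsp : (0:ℝ) < (N:ℝ) - s * p := sub_pos.mpr hN
  have hq0 : (0:ℝ) < (N:ℝ) * p / ((N:ℝ) - s * p) := div_pos (mul_pos hN0 hp0) hNsp
  have hmeas : Measurable u := hu.1.1
  have hA : gagNorm N s p u ^ p = (gagPow N s p u).toReal := by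
    rw [gagNorm, ← Real.rpow_mul ENNReal.toReal_nonneg, one_div,
      inv_mul_cancel₀ (ne_of_gt hp0), Real.rpow_one]
  have hAform : Aform N s p u u = (gagPow N s p u).toReal := by
    have hcong : Aform N s p u u = ∫ z : (Fin N → ℝ) × (Fin N → ℝ),
        |u z.1 - u z.2| ^ p / dist z.1 z.2 ^ ((N : ℝ) + s * p) := by
      unfold Aform
      congr 1
      funext z
      rw [aux_abs_rpow p (ne_of_gt hp0)]
    rw [hcong, gagPow]
    apply integral_eq_lintegral_of_nonneg_ae
    · filter_upwards with z
      exact div_nonneg (Real.rpow_nonneg (abs_nonneg _) _) (Real.rpow_nonneg dist_nonneg _)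
    · exact (((Real.continuous_rpow_const (le_of_lt hp0)).measurable.comp
          (((hmeas.comp measurable_fst).sub (hmeas.comp measurable_snd)).abs)).div
        ((Real.continuous_rpow_const (by positivity)).measurable.comp
          measurable_dist)).aestronglyMeasurable
  have hBint : ∀ r : ℝ, 0 < r →
      (∫ x in Ω, |u x| ^ (r - 2) * u x * u x) = lnorm N r Ω u ^ r := by
    intro r hr
    have h1 : (∫ x in Ω, |u x| ^ (r - 2) * u x * u x) = ∫ x in Ω, |u x| ^ r := by
      apply integral_congr_ae
      filter_upwards with x
      exact aux_abs_rpow r (ne_of_gt hr) (u x)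
    have h2 : (0:ℝ) ≤ ∫ x in Ω, |u x| ^ r :=
      integral_nonneg fun x => Real.rpow_nonneg (abs_nonneg _) _
    rw [h1, lnorm, ← Real.rpow_mul h2, one_div, inv_mul_cancel₀ (ne_of_gt hr), Real.rpow_one]
  have hkey := hcrit u hu
  rw [hBint p hp0, hBint (N * p / (N - s * p)) hq0, hAform] at hkey
  rw [hA] at hc
  set A := (gagPow N s p u).toReal
  set B := lnorm N p Ω u ^ p
  set C := lnorm N (N * p / (N - s * p)) Ω u ^ (N * p / (N - s * p))
  -- hkey : A = lam₀ * B + C ;  hc : c = A/p - lam₀ B /p - C / q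
  have hCc : C = N / s * c := by
    rw [hc, hkey]
    field_simp
    ring
  refine ⟨hCc, ?_⟩
  rw [hCc]
  calc (N:ℝ) / s * c ≤ N / s * (s / N * (volume Ω).toReal
        * (lam (k + 1) - lam₀) ^ ((N : ℝ) / (s * p))) := by
        apply mul_le_mul_of_nonneg_left hcle (le_of_lt (div_pos hN0 hs))
    _ = (volume Ω).toReal * (lam (k + 1) - lam₀) ^ ((N : ℝ) / (s * p)) := by
        field_simp
end
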